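/- arXiv:math/0305422 — 7 statements merged into one kernel-verified Lean document; each statement's English description precedes it below -/
import Mathlib

section
/- Let ψ be a surjective local trivialization of a locally free sheaf G with (0,1)-connection ∂̄ satisfying ∂̄ψ = ψ·ω for a matrix ω of (0,1)-forms. Then ∂̄² = 0 if and only if ∂̄_J ω + ω ∧ ω = 0. -/
/-- Let `ψ` be a (surjective, injective) local trivialization of a locally free
sheaf `G` with a (0,1)-connection `∂̄` satisfying `∂̄ψ = ψ·ω` for a matrix `ω` of (0,1)-forms.
Then `∂̄² = 0` if and only if `∂̄_J ω + ω ∧ ω = 0`.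

Model: `Ω` is the (noncommutative) algebra of (0,•)-forms on `U`, `d = ∂̄_J` acting
entrywise, `M` stands for the sections of `G ⊗ E^{0,•}` over `U`, `ψ` is the additive
isomorphism induced by the trivialization, and the condition `∂̄ψ = ψ·ω` is expressed by
`hconn`.  The graded Leibniz rule for the degree-one entries of `ω` is recorded in `hleib`. -/
theorem stmt1 {Ω M : Type*} [Ring Ω] [AddCommGroup M]
    (d : Ω →+ Ω) (hd2 : ∀ x : Ω, d (d x) = 0)
    (r : ℕ) (ω : Matrix (Fin r) (Fin r) Ω)
    (hleib : ∀ (i j : Fin r) (x : Ω),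
      d (ω i j * x) = d (ω i j) * x - ω i j * d x)
    (ψ : (Fin r → Ω) →+ M)
    (hinj : Function.Injective ψ) (hsurj : Function.Surjective ψ)
    (dbar : M → M)
    (hconn : ∀ v : Fin r → Ω,
      dbar (ψ v) = ψ (fun i => d (v i) + ∑ j, ω i j * v j)) :
    (∀ x : M, dbar (dbar x) = 0) ↔ ω.map ⇑d + ω * ω = 0 := by
  have key : ∀ v : Fin r → Ω,
      dbar (dbar (ψ v)) = ψ (fun i => ∑ j, (ω.map ⇑d + ω * ω) i j * v j) := by
    intro v
    rw [hconn, hconn]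
    congr 1
    funext i
    have : (fun i => d (v i) + ∑ j, ω i j * v j) = fun i => d (v i) + ∑ j, ω i j * v j := rfl
    simp only [map_add, map_sum, hd2, hleib, zero_add, Matrix.add_apply, Matrix.map_apply,
      Matrix.mul_apply, Finset.sum_sub_distrib, Finset.mul_sum, Finset.sum_add_distrib,
      add_mul, Finset.sum_mul, mul_assoc, mul_add]
    rw [Finset.sum_comm (f := fun j k => ω i j * (ω j k * v k))]
    abel
  constructor
  · intro h0
    ext i j
    have := key (Pi.single j 1 : Fin r → Ω)
    rw [h0] at this
    have h2 : (fun i => ∑ k, (ω.map ⇑d + ω * ω) i k * (Pi.single j 1 : Fin r → Ω) k) = (0 : Fin r → Ω) := by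
      apply hinj
      rw [map_zero]
      exact this.symm
    have h3 := congrFun h2 i
    simpa [Pi.single_apply, Finset.sum_ite_eq'] using h3
  · intro h0 x
    obtain ⟨v, rfl⟩ := hsurj x
    rw [key, h0]
    simp only [Matrix.zero_apply, zero_mul, Finset.sum_const_zero]
    show ψ (fun _ => 0) = 0
    have : (fun _ : Fin r => (0:Ω)) = 0 := rfl
    rw [this, map_zero]
end

section
/- Given a (0,1)-connection ∂̄ with ∂̄² = 0 on a sheaf G with a local presentation E^{⊕p₁} →^φ E^{⊕p₀} →^ψ G → 0 and connection matrices satisfying ∂̄_J φ + ω^{0,0}·φ = φ·ω^{1,0} and ∂̄_J ω^{0,0} + ω^{0,0}∧ω^{0,0} = φ·ω^{0,1}, if φ is injective then ∂̄_J ω^{1,0} + ω^{1,0}∧ω^{1,0} = ω^{0,1}·φ. -/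
/-- Given a (0,1)-connection `∂̄` with `∂̄² = 0` on a sheaf `G` with a local
presentation `E^{⊕p₁} →^φ E^{⊕p₀} →^ψ G → 0` and connection matrices satisfying
`∂̄_J φ + ω⁰⁰·φ = φ·ω¹⁰` and `∂̄_J ω⁰⁰ + ω⁰⁰ ∧ ω⁰⁰ = φ·ω⁰¹`, if `φ` is injective then
`∂̄_J ω¹⁰ + ω¹⁰ ∧ ω¹⁰ = ω⁰¹·φ`.

Model: `Ω` is the graded algebra of (0,•)-forms on `U` (grading `𝒜`, `d = ∂̄_J` entrywise
with `d² = 0` and the graded Leibniz rule); `φ` has degree-0 entries, `ω⁰⁰, ω¹⁰` degree-1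
entries, `ω⁰¹` degree-2 entries; injectivity of `φ` as a morphism `E^{⊕p₁} → E^{⊕p₀}` is
expressed via `mulVec`. -/
theorem stmt3 {Ω : Type*} [Ring Ω]
    (𝒜 : ℕ → AddSubgroup Ω) (h1mem : (1 : Ω) ∈ 𝒜 0)
    (hmulmem : ∀ (a b : ℕ) (x y : Ω), x ∈ 𝒜 a → y ∈ 𝒜 b → x * y ∈ 𝒜 (a + b))
    (d : Ω →+ Ω) (hd2 : ∀ x : Ω, d (d x) = 0)
    (hdmem : ∀ (a : ℕ) (x : Ω), x ∈ 𝒜 a → d x ∈ 𝒜 (a + 1))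
    (hleib : ∀ (a : ℕ) (x y : Ω), x ∈ 𝒜 a →
      d (x * y) = d x * y + ((-1 : ℤ) ^ a) • (x * d y))
    (p₀ p₁ : ℕ)
    (φ : Matrix (Fin p₀) (Fin p₁) Ω) (hφdeg : ∀ i j, φ i j ∈ 𝒜 0)
    (ω00 : Matrix (Fin p₀) (Fin p₀) Ω) (h00deg : ∀ i j, ω00 i j ∈ 𝒜 1)
    (ω10 : Matrix (Fin p₁) (Fin p₁) Ω) (h10deg : ∀ i j, ω10 i j ∈ 𝒜 1)
    (ω01 : Matrix (Fin p₁) (Fin p₀) Ω) (h01deg : ∀ i j, ω01 i j ∈ 𝒜 2)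
    (hφinj : ∀ v : Fin p₁ → Ω, φ.mulVec v = 0 → v = 0)
    (h1rel : φ.map ⇑d + ω00 * φ = φ * ω10)
    (h2rel : ω00.map ⇑d + ω00 * ω00 = φ * ω01) :
    ω10.map ⇑d + ω10 * ω10 = ω01 * φ := by

  classical
  -- entrywise map is additive
  have mapAdd : ∀ {m n : ℕ} (A B : Matrix (Fin m) (Fin n) Ω),
      (A + B).map ⇑d = A.map ⇑d + B.map ⇑d := by
    intro m n A B; ext i j; simp
  -- graded Leibniz rule for matrix products
  have matLeib : ∀ (a : ℕ) {m n p : ℕ} (M : Matrix (Fin m) (Fin n) Ω)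
      (N : Matrix (Fin n) (Fin p) Ω), (∀ i j, M i j ∈ 𝒜 a) →
      (M * N).map ⇑d = M.map ⇑d * N + ((-1 : ℤ) ^ a) • (M * N.map ⇑d) := by
    intro a m n p M N hM
    ext i j
    simp only [Matrix.map_apply, Matrix.mul_apply, Matrix.add_apply, Matrix.smul_apply,
      map_sum, Finset.smul_sum]
    rw [← Finset.sum_add_distrib]
    exact Finset.sum_congr rfl fun k _ => hleib a _ _ (hM i k)
  have hdd : (φ.map ⇑d).map ⇑d = 0 := by ext i j; simp [hd2]
  have e1 : (φ * ω10).map ⇑d = φ.map ⇑d * ω10 + φ * ω10.map ⇑d := by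
    rw [matLeib 0 φ ω10 hφdeg]; simp
  have e2 : (ω00 * φ).map ⇑d = ω00.map ⇑d * φ - ω00 * φ.map ⇑d := by
    rw [matLeib 1 ω00 φ h00deg]; simp [sub_eq_add_neg]
  have hφd : φ.map ⇑d = φ * ω10 - ω00 * φ := eq_sub_of_add_eq h1rel
  have h00d : ω00.map ⇑d = φ * ω01 - ω00 * ω00 := eq_sub_of_add_eq h2rel
  have e3 : (φ.map ⇑d).map ⇑d + (ω00 * φ).map ⇑d = (φ * ω10).map ⇑d := by
    rw [← mapAdd, h1rel]
  rw [hdd, zero_add, e1, e2, hφd, h00d] at e3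
  have hX : φ * ω10.map ⇑d = φ * (ω01 * φ) - φ * (ω10 * ω10) := by
    rw [Matrix.sub_mul, Matrix.mul_sub, Matrix.sub_mul, Matrix.mul_assoc φ ω01 φ,
      Matrix.mul_assoc ω00 ω00 φ, Matrix.mul_assoc φ ω10 ω10,
      Matrix.mul_assoc ω00 φ ω10] at e3
    calc φ * ω10.map ⇑d
        = (φ * (ω10 * ω10) - ω00 * (φ * ω10) + φ * ω10.map ⇑d)
            - φ * (ω10 * ω10) + ω00 * (φ * ω10) := by abel
      _ = (φ * (ω01 * φ) - ω00 * (ω00 * φ) - (ω00 * (φ * ω10) - ω00 * (ω00 * φ)))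
            - φ * (ω10 * ω10) + ω00 * (φ * ω10) := by rw [← e3]
      _ = φ * (ω01 * φ) - φ * (ω10 * ω10) := by abel
  have key : φ * (ω10.map ⇑d + ω10 * ω10 - ω01 * φ) = 0 := by
    rw [Matrix.mul_sub, Matrix.mul_add, hX, ← Matrix.mul_assoc φ ω01 φ, Matrix.mul_assoc φ ω01 φ]
    abel
  have hsub : ω10.map ⇑d + ω10 * ω10 - ω01 * φ = 0 := by
    set D := ω10.map ⇑d + ω10 * ω10 - ω01 * φ with hDdef
    ext i j
    have hv : φ.mulVec (fun k => D k j) = 0 := by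
      ext l
      simpa [Matrix.mulVec, dotProduct, Matrix.mul_apply] using
        congrFun (congrFun key l) j
    have := congrFun (hφinj _ hv) i
    simpa using this
  exact sub_eq_zero.mp hsub
end

section
/- Under the same assumptions (φ injective, ∂̄_J φ + ω^{0,0}·φ = φ·ω^{1,0}, ∂̄_J ω^{0,0} + ω^{0,0}∧ω^{0,0} = φ·ω^{0,1}, and ∂̄_J ω^{1,0} + ω^{1,0}∧ω^{1,0} = ω^{0,1}·φ), one has ∂̄_J ω^{0,1} − ω^{0,1}∧ω^{0,0} + ω^{1,0}∧ω^{0,1} = 0. -/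
section aux

variable {Ω : Type*} [Ring Ω] (𝒜 : ℕ → AddSubgroup Ω) (d : Ω →+ Ω)

lemma mat_leib {m n p : Type*} [Fintype n]
    (hleib : ∀ (a : ℕ) (x y : Ω), x ∈ 𝒜 a →
      d (x * y) = d x * y + ((-1 : ℤ) ^ a) • (x * d y))
    (a : ℕ) (A : Matrix m n Ω) (B : Matrix n p Ω) (hA : ∀ i j, A i j ∈ 𝒜 a) :
    (A * B).map ⇑d = (A.map ⇑d) * B + ((-1 : ℤ) ^ a) • (A * B.map ⇑d) := by
  ext i j
  simp only [Matrix.map_apply, Matrix.mul_apply, Matrix.add_apply, Matrix.smul_apply,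
    map_sum, Finset.smul_sum]
  rw [← Finset.sum_add_distrib]
  exact Finset.sum_congr rfl fun k _ => hleib a _ _ (hA i k)

lemma mat_map_add {m n : Type*} (A B : Matrix m n Ω) :
    (A + B).map ⇑d = A.map ⇑d + B.map ⇑d := by
  ext i j; simp [Matrix.map_apply]

end aux

/-- Under the assumptions of the length-one presentation (`φ` injective,
`∂̄_J φ + ω⁰⁰·φ = φ·ω¹⁰`, `∂̄_J ω⁰⁰ + ω⁰⁰ ∧ ω⁰⁰ = φ·ω⁰¹`, and
`∂̄_J ω¹⁰ + ω¹⁰ ∧ ω¹⁰ = ω⁰¹·φ`), one has `∂̄_J ω⁰¹ − ω⁰¹ ∧ ω⁰⁰ + ω¹⁰ ∧ ω⁰¹ = 0`.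

Same model as Statement 3: `Ω` is the graded algebra of (0,•)-forms with `d = ∂̄_J`
satisfying `d² = 0` and the graded Leibniz rule. -/
theorem stmt4 {Ω : Type*} [Ring Ω]
    (𝒜 : ℕ → AddSubgroup Ω) (h1mem : (1 : Ω) ∈ 𝒜 0)
    (hmulmem : ∀ (a b : ℕ) (x y : Ω), x ∈ 𝒜 a → y ∈ 𝒜 b → x * y ∈ 𝒜 (a + b))
    (d : Ω →+ Ω) (hd2 : ∀ x : Ω, d (d x) = 0)
    (hdmem : ∀ (a : ℕ) (x : Ω), x ∈ 𝒜 a → d x ∈ 𝒜 (a + 1))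
    (hleib : ∀ (a : ℕ) (x y : Ω), x ∈ 𝒜 a →
      d (x * y) = d x * y + ((-1 : ℤ) ^ a) • (x * d y))
    (p₀ p₁ : ℕ)
    (φ : Matrix (Fin p₀) (Fin p₁) Ω) (hφdeg : ∀ i j, φ i j ∈ 𝒜 0)
    (ω00 : Matrix (Fin p₀) (Fin p₀) Ω) (h00deg : ∀ i j, ω00 i j ∈ 𝒜 1)
    (ω10 : Matrix (Fin p₁) (Fin p₁) Ω) (h10deg : ∀ i j, ω10 i j ∈ 𝒜 1)
    (ω01 : Matrix (Fin p₁) (Fin p₀) Ω) (h01deg : ∀ i j, ω01 i j ∈ 𝒜 2)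
    (hφinj : ∀ v : Fin p₁ → Ω, φ.mulVec v = 0 → v = 0)
    (h1rel : φ.map ⇑d + ω00 * φ = φ * ω10)
    (h2rel : ω00.map ⇑d + ω00 * ω00 = φ * ω01)
    (h3rel : ω10.map ⇑d + ω10 * ω10 = ω01 * φ) :
    ω01.map ⇑d - ω01 * ω00 + ω10 * ω01 = 0 := by
  have hφd : φ.map ⇑d = φ * ω10 - ω00 * φ := eq_sub_of_add_eq h1rel
  have h00d : ω00.map ⇑d = φ * ω01 - ω00 * ω00 := eq_sub_of_add_eq h2rel
  have hdd : (ω00.map ⇑d).map ⇑d = 0 := by ext i j; simp [Matrix.map_apply, hd2]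
  -- apply d to h2rel
  have key : (ω00.map ⇑d) * ω00 - ω00 * (ω00.map ⇑d)
      = (φ.map ⇑d) * ω01 + φ * (ω01.map ⇑d) := by
    have h := congrArg (fun M : Matrix (Fin p₀) (Fin p₀) Ω => M.map ⇑d) h2rel
    rw [mat_map_add, hdd, mat_leib 𝒜 d hleib 1 ω00 ω00 h00deg,
      mat_leib 𝒜 d hleib 0 φ ω01 hφdeg] at h
    simpa [sub_eq_add_neg] using h
  have hφX : φ * (ω01.map ⇑d - ω01 * ω00 + ω10 * ω01) = 0 := by
    rw [hφd, h00d] at key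
    rw [Matrix.mul_add, Matrix.mul_sub]
    have key2 : φ * (ω01 * ω00) = φ * (ω10 * ω01) + φ * (ω01.map ⇑d) := by
      have h : φ * (ω01 * ω00)
          = ω00 * (φ * ω01) + (φ * (ω10 * ω01) - ω00 * (φ * ω01) + φ * ω01.map ⇑d) := by
        simpa [Matrix.sub_mul, Matrix.mul_sub, Matrix.mul_assoc, sub_eq_iff_eq_add,
          add_comm, add_left_comm, add_assoc] using key
      rw [h]; abel
    rw [key2]; abel
  have hX : (ω01.map ⇑d - ω01 * ω00 + ω10 * ω01) = 0 := by
    ext i j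
    have hcol : φ.mulVec (fun k => (ω01.map ⇑d - ω01 * ω00 + ω10 * ω01) k j) = 0 := by
      funext i'
      simpa [Matrix.mulVec, dotProduct, Matrix.mul_apply] using
        congrFun (congrFun hφX i') j
    simpa using congrFun (hφinj _ hcol) i
  exact hX
end

section
/- The exterior product of parameters, defined componentwise by (η₁∧η₂)^{s,k} := η₁^{s,k} + η₂^{s,k} + Σ_{j=0}^{k} η₁^{s+j,k-j} ∧ η₂^{s,j}, is an associative semigroup law on the set P(U) of recalibration parameters, with neutral element 0. -/
/-- Recalibration parameters.  A parameter `η = (η^{s,k})` with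
`η^{s,k} ∈ M_{p_{s+k},p_s}(E^{0,k}(U))` is encoded by its (target, source) block
indices: `η t s` corresponds to `η^{s,k}` with `t = s + k`.  Here `Ω` is the algebra
of (0,•)-forms on `U` (matrix wedge = matrix product in `Ω`). -/
def IsParam {Ω : Type*} [Ring Ω] (m : ℕ) (p : ℤ → ℕ)
    (η : ∀ t s : ℤ, Matrix (Fin (p t)) (Fin (p s)) Ω) : Prop :=
  (∀ t s : ℤ, ¬(0 ≤ s ∧ s ≤ t ∧ t ≤ (m : ℤ)) → η t s = 0) ∧
  ∀ s : ℤ, IsUnit ((1 : Matrix (Fin (p s)) (Fin (p s)) Ω) + η s s)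

/-- Exterior product of parameters:
`(η₁∧η₂)^{s,k} = η₁^{s,k} + η₂^{s,k} + Σ_{j=0}^{k} η₁^{s+j,k-j} ∧ η₂^{s,j}`,
in (target, source) indices `(η₁∧η₂) t s = η₁ t s + η₂ t s + Σ_{u=s}^{t} η₁ t u * η₂ u s`. -/
noncomputable def pwedge {Ω : Type*} [Ring Ω] (p : ℤ → ℕ)
    (η₁ η₂ : ∀ t s : ℤ, Matrix (Fin (p t)) (Fin (p s)) Ω) :
    ∀ t s : ℤ, Matrix (Fin (p t)) (Fin (p s)) Ω :=
  fun t s => η₁ t s + η₂ t s + ∑ u ∈ Finset.Icc s t, η₁ t u * η₂ u s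

/-! Under `η ↦ 1 + η` the product `pwedge` becomes multiplication of block lower-triangular
matrices: associativity is the reindexing of a triangular double sum, and the diagonal
block of `1 + η₁ ∧ η₂` is the product of the diagonal blocks, hence invertible. -/

open Finset

theorem Finset.sum_Icc_sum_Icc_comm {M : Type*} [AddCommMonoid M] (s t : ℤ) (f : ℤ → ℤ → M) :
    ∑ u ∈ Icc s t, ∑ v ∈ Icc u t, f u v = ∑ v ∈ Icc s t, ∑ u ∈ Icc s v, f u v :=
  sum_comm' fun u v => by simp only [mem_Icc]; omega

section

variable {Ω : Type*} [Ring Ω] {p : ℤ → ℕ}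

theorem pwedge_zero_right (η : ∀ t s : ℤ, Matrix (Fin (p t)) (Fin (p s)) Ω) :
    pwedge p η (fun _ _ => 0) = η := by
  funext t s
  simp [pwedge]

theorem pwedge_zero_left (η : ∀ t s : ℤ, Matrix (Fin (p t)) (Fin (p s)) Ω) :
    pwedge p (fun _ _ => 0) η = η := by
  funext t s
  simp [pwedge]

theorem one_add_pwedge_diag (η₁ η₂ : ∀ t s : ℤ, Matrix (Fin (p t)) (Fin (p s)) Ω) (s : ℤ) :
    1 + pwedge p η₁ η₂ s s = (1 + η₁ s s) * (1 + η₂ s s) := by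
  simp only [pwedge, Icc_self, sum_singleton, Matrix.mul_add, Matrix.add_mul,
    Matrix.one_mul, Matrix.mul_one]
  abel

theorem pwedge_assoc (η₁ η₂ η₃ : ∀ t s : ℤ, Matrix (Fin (p t)) (Fin (p s)) Ω) :
    pwedge p (pwedge p η₁ η₂) η₃ = pwedge p η₁ (pwedge p η₂ η₃) := by
  funext t s
  have triple : ∑ u ∈ Icc s t, ∑ v ∈ Icc u t, η₁ t v * η₂ v u * η₃ u s
      = ∑ v ∈ Icc s t, ∑ u ∈ Icc s v, η₁ t v * (η₂ v u * η₃ u s) := by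
    simp only [Matrix.mul_assoc]
    exact sum_Icc_sum_Icc_comm s t fun u v => η₁ t v * (η₂ v u * η₃ u s)
  simp only [pwedge, sum_add_distrib, Matrix.add_mul, Matrix.mul_add, Matrix.sum_mul,
    Matrix.mul_sum]
  rw [triple]
  abel

theorem pwedge_apply_eq_zero {m : ℕ} {η₁ η₂ : ∀ t s : ℤ, Matrix (Fin (p t)) (Fin (p s)) Ω}
    (h₁ : ∀ t s : ℤ, ¬(0 ≤ s ∧ s ≤ t ∧ t ≤ (m : ℤ)) → η₁ t s = 0)
    (h₂ : ∀ t s : ℤ, ¬(0 ≤ s ∧ s ≤ t ∧ t ≤ (m : ℤ)) → η₂ t s = 0)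
    {t s : ℤ} (hts : ¬(0 ≤ s ∧ s ≤ t ∧ t ≤ (m : ℤ))) :
    pwedge p η₁ η₂ t s = 0 := by
  have hterm : ∀ u ∈ Icc s t, η₁ t u * η₂ u s = 0 := by
    intro u hu
    rw [mem_Icc] at hu
    by_cases hs : 0 ≤ s
    · rw [h₁ t u (by omega), Matrix.zero_mul]
    · rw [h₂ u s (by omega), Matrix.mul_zero]
  simp [pwedge, h₁ t s hts, h₂ t s hts, sum_eq_zero hterm]

theorem IsParam.pwedge {m : ℕ} {η₁ η₂ : ∀ t s : ℤ, Matrix (Fin (p t)) (Fin (p s)) Ω}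
    (h₁ : IsParam m p η₁) (h₂ : IsParam m p η₂) : IsParam m p (pwedge p η₁ η₂) :=
  ⟨fun _ _ => pwedge_apply_eq_zero h₁.1 h₂.1,
    fun s => one_add_pwedge_diag η₁ η₂ s ▸ (h₁.2 s).mul (h₂.2 s)⟩

end

theorem stmt5_general {Ω : Type*} [Ring Ω] (m : ℕ) (p : ℤ → ℕ)
    (η₁ η₂ η₃ : ∀ t s : ℤ, Matrix (Fin (p t)) (Fin (p s)) Ω)
    (h₁ : IsParam m p η₁) (h₂ : IsParam m p η₂) :
    IsParam m p (pwedge p η₁ η₂)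
    ∧ pwedge p (pwedge p η₁ η₂) η₃ = pwedge p η₁ (pwedge p η₂ η₃)
    ∧ pwedge p η₁ (fun _ _ => 0) = η₁
    ∧ pwedge p (fun _ _ => 0) η₁ = η₁ :=
  ⟨h₁.pwedge h₂, pwedge_assoc η₁ η₂ η₃, pwedge_zero_right η₁, pwedge_zero_left η₁⟩

/-- The exterior product of parameters is an associative semigroup law on the
set `P(U)` of recalibration parameters (closure, associativity), with neutral element `0`. -/
theorem stmt5 {Ω : Type*} [Ring Ω] (m : ℕ) (p : ℤ → ℕ)
    (η₁ η₂ η₃ : ∀ t s : ℤ, Matrix (Fin (p t)) (Fin (p s)) Ω)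
    (h₁ : IsParam m p η₁) (h₂ : IsParam m p η₂) (h₃ : IsParam m p η₃) :
    IsParam m p (pwedge p η₁ η₂)
    ∧ pwedge p (pwedge p η₁ η₂) η₃ = pwedge p η₁ (pwedge p η₂ η₃)
    ∧ pwedge p η₁ (fun _ _ => 0) = η₁
    ∧ pwedge p (fun _ _ => 0) η₁ = η₁ :=
  stmt5_general m p η₁ η₂ η₃ h₁ h₂
end

section
/- The recalibration map R(η,ω) = ω_η, defined recursively by ω^{s,k}_η = (I + η^{s+k,0})^{-1}·(∂̄_J η^{s,k} + Σ_{j=0}^{k+1} ω^{s+j,k-j}∧η^{s,j} − Σ_{j=-1}^{k-1} (−1)^{k-j} η^{s+j,k-j}∧ω^{s,j}_η + ω^{s,k}), satisfies the action law R(η₂, R(η₁, ω)) = R(η₁∧η₂, ω). -/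
lemma stmt6_sum_swap {M : Type*} [AddCommMonoid M] (A B : Finset ℤ) (f : ℤ → M)
    (hA : ∀ u ∈ A, u ∉ B → f u = 0) (hB : ∀ u ∈ B, u ∉ A → f u = 0) :
    ∑ u ∈ A, f u = ∑ u ∈ B, f u := by
  calc ∑ u ∈ A, f u = ∑ u ∈ A ∩ B, f u :=
        (Finset.sum_subset Finset.inter_subset_left (fun x hx hnx =>
          hA x hx (fun hxB => hnx (Finset.mem_inter.mpr ⟨hx, hxB⟩)))).symm
    _ = ∑ u ∈ B, f u :=
        Finset.sum_subset Finset.inter_subset_right (fun x hx hnx =>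
          hB x hx (fun hxA => hnx (Finset.mem_inter.mpr ⟨hxA, hx⟩)))

lemma stmt6_eps_add (a b : ℤ) :
    ((-1:ℤ)^(a+b).natAbs) = ((-1:ℤ)^a.natAbs) * ((-1:ℤ)^b.natAbs) := by
  rcases Int.even_or_odd a with ha | ha <;> rcases Int.even_or_odd b with hb | hb
  · rw [(Int.natAbs_even.mpr (ha.add hb)).neg_one_pow,
      (Int.natAbs_even.mpr ha).neg_one_pow, (Int.natAbs_even.mpr hb).neg_one_pow]; ring
  · rw [(Int.natAbs_odd.mpr (ha.add_odd hb)).neg_one_pow,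
      (Int.natAbs_even.mpr ha).neg_one_pow, (Int.natAbs_odd.mpr hb).neg_one_pow]; ring
  · rw [(Int.natAbs_odd.mpr (ha.add_even hb)).neg_one_pow,
      (Int.natAbs_odd.mpr ha).neg_one_pow, (Int.natAbs_even.mpr hb).neg_one_pow]; ring
  · rw [(Int.natAbs_even.mpr (ha.add_odd hb)).neg_one_pow,
      (Int.natAbs_odd.mpr ha).neg_one_pow, (Int.natAbs_odd.mpr hb).neg_one_pow]; ring

lemma stmt6_mleib {Ω : Type*} [Ring Ω] (𝒜 : ℕ → AddSubgroup Ω) (d : Ω →+ Ω)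
    (hleib : ∀ (a : ℕ) (x y : Ω), x ∈ 𝒜 a →
      d (x * y) = d x * y + ((-1 : ℤ) ^ a) • (x * d y))
    {n₁ n₂ n₃ : ℕ} (a : ℕ) (X : Matrix (Fin n₁) (Fin n₂) Ω) (Y : Matrix (Fin n₂) (Fin n₃) Ω)
    (hX : ∀ i j, X i j ∈ 𝒜 a) :
    (X * Y).map ⇑d = X.map ⇑d * Y + ((-1:ℤ)^a) • (X * Y.map ⇑d) := by
  ext i j
  simp only [Matrix.map_apply, Matrix.mul_apply, Matrix.add_apply, Matrix.smul_apply]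
  rw [map_sum, Finset.smul_sum, ← Finset.sum_add_distrib]
  exact Finset.sum_congr rfl fun k _ => hleib a _ _ (hX i k)



set_option maxHeartbeats 2000000 in
/-- The recalibration map `R(η,ω) = ω_η`, defined recursively by
`ω^{s,k}_η = (I + η^{s+k,0})⁻¹·(∂̄_J η^{s,k} + Σ_{j=0}^{k+1} ω^{s+j,k-j}∧η^{s,j}
 − Σ_{j=-1}^{k-1} (−1)^{k-j} η^{s+j,k-j}∧ω^{s,j}_η + ω^{s,k})`,
satisfies the semigroup action law `R(η₂, R(η₁, ω)) = R(η₁∧η₂, ω)`.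

Encoding: `Ω` is the graded algebra of (0,•)-forms on `U` (grading `𝒜`, `d = ∂̄_J` with
`d² = 0` and the graded Leibniz rule); all block matrices are indexed by their (target,
source) indices, `ω t s` corresponding to `ω^{s,k}` with `t = s + k` (entries of degree
`k+1`), `η t s` to `η^{s,k}` (entries of degree `k`); the conventions `ω^{0,-1} = 0`,
`ω^{-1,j} = 0`, `ω^{s,k} = 0` for `s ≥ m+1` or `k ≥ m-s+1` (and similarly for `η`) are the
support hypotheses; `ω ∈ Ω(U,m)` is expressed by `hωcpx` and the integrability relations
`hωint`; `gi₁ t`, `gi₂ t`, `gi₁₂ t` are the inverses of `I + η₁^{t,0}`, `I + η₂^{t,0}`,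
`I + (η₁∧η₂)^{t,0}`; `ω₁ = R(η₁,ω)`, `ω₂ = R(η₂,ω₁)`, `ω₁₂ = R(η₁∧η₂,ω)` are characterized
by their defining recursions. -/
theorem stmt6 {Ω : Type*} [Ring Ω]
    (𝒜 : ℕ → AddSubgroup Ω) (h1mem : (1 : Ω) ∈ 𝒜 0)
    (hmulmem : ∀ (a b : ℕ) (x y : Ω), x ∈ 𝒜 a → y ∈ 𝒜 b → x * y ∈ 𝒜 (a + b))
    (d : Ω →+ Ω) (hd2 : ∀ x : Ω, d (d x) = 0)
    (hdmem : ∀ (a : ℕ) (x : Ω), x ∈ 𝒜 a → d x ∈ 𝒜 (a + 1))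
    (hleib : ∀ (a : ℕ) (x y : Ω), x ∈ 𝒜 a →
      d (x * y) = d x * y + ((-1 : ℤ) ^ a) • (x * d y))
    (m : ℕ) (p : ℤ → ℕ)
    (ω ω₁ ω₂ ω₁₂ η₁ η₂ η₁₂ : ∀ t s : ℤ, Matrix (Fin (p t)) (Fin (p s)) Ω)
    (gi₁ gi₂ gi₁₂ : ∀ t : ℤ, Matrix (Fin (p t)) (Fin (p t)) Ω)
    -- `ω ∈ Ω(U,m)`: support, degrees, complex property and integrability
    (hωsupp : ∀ t s : ℤ,
      ¬(0 ≤ s ∧ s ≤ (m : ℤ) ∧ s - 1 ≤ t ∧ t ≤ (m : ℤ) ∧ ¬(s = 0 ∧ t = -1)) → ω t s = 0)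
    (hωdeg : ∀ (t s : ℤ) i j, ω t s i j ∈ 𝒜 (t - s + 1).toNat)
    (hωcpx : ∀ s : ℤ, ω (s - 2) (s - 1) * ω (s - 1) s = 0)
    (hωint : ∀ t s : ℤ,
      (ω t s).map ⇑d + ∑ u ∈ Finset.Icc (s - 1) (t + 1),
        ((-1 : ℤ) ^ (t - u).natAbs) • (ω t u * ω u s) = 0)
    -- `η₁, η₂ ∈ P(U)`: support, degrees, invertibility of `I + η^{t,0}`
    (hη₁supp : ∀ t s : ℤ, ¬(0 ≤ s ∧ s ≤ t ∧ t ≤ (m : ℤ)) → η₁ t s = 0)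
    (hη₂supp : ∀ t s : ℤ, ¬(0 ≤ s ∧ s ≤ t ∧ t ≤ (m : ℤ)) → η₂ t s = 0)
    (hη₁deg : ∀ (t s : ℤ) i j, η₁ t s i j ∈ 𝒜 (t - s).toNat)
    (hη₂deg : ∀ (t s : ℤ) i j, η₂ t s i j ∈ 𝒜 (t - s).toNat)
    (hgi₁ : ∀ t : ℤ, gi₁ t * (1 + η₁ t t) = 1 ∧ (1 + η₁ t t) * gi₁ t = 1)
    (hgi₂ : ∀ t : ℤ, gi₂ t * (1 + η₂ t t) = 1 ∧ (1 + η₂ t t) * gi₂ t = 1)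
    -- the exterior product `η₁₂ = η₁ ∧ η₂`
    (hη₁₂ : ∀ t s : ℤ,
      η₁₂ t s = η₁ t s + η₂ t s + ∑ u ∈ Finset.Icc s t, η₁ t u * η₂ u s)
    (hgi₁₂ : ∀ t : ℤ, gi₁₂ t * (1 + η₁₂ t t) = 1 ∧ (1 + η₁₂ t t) * gi₁₂ t = 1)
    -- the defining recursions `ω₁ = R(η₁,ω)`, `ω₂ = R(η₂,ω₁)`, `ω₁₂ = R(η₁∧η₂,ω)`
    (hω₁ : ∀ t s : ℤ, ω₁ t s = gi₁ t *
      ((η₁ t s).map ⇑d + (∑ u ∈ Finset.Icc s (t + 1), ω t u * η₁ u s)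
        - (∑ u ∈ Finset.Icc (s - 1) (t - 1),
            ((-1 : ℤ) ^ (t - u).natAbs) • (η₁ t u * ω₁ u s))
        + ω t s))
    (hω₂ : ∀ t s : ℤ, ω₂ t s = gi₂ t *
      ((η₂ t s).map ⇑d + (∑ u ∈ Finset.Icc s (t + 1), ω₁ t u * η₂ u s)
        - (∑ u ∈ Finset.Icc (s - 1) (t - 1),
            ((-1 : ℤ) ^ (t - u).natAbs) • (η₂ t u * ω₂ u s))
        + ω₁ t s))
    (hω₁₂ : ∀ t s : ℤ, ω₁₂ t s = gi₁₂ t *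
      ((η₁₂ t s).map ⇑d + (∑ u ∈ Finset.Icc s (t + 1), ω t u * η₁₂ u s)
        - (∑ u ∈ Finset.Icc (s - 1) (t - 1),
            ((-1 : ℤ) ^ (t - u).natAbs) • (η₁₂ t u * ω₁₂ u s))
        + ω t s)) :
    ω₂ = ω₁₂ := by
  classical
  have hωs : ∀ t s : ℤ, ¬(0 ≤ s ∧ s ≤ (m : ℤ) ∧ s - 1 ≤ t ∧ t ≤ (m : ℤ)) → ω t s = 0 := by
    intro t s hc
    refine hωsupp t s ?_
    rintro ⟨a, b, c, d', -⟩
    exact hc ⟨a, b, c, d'⟩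
  have key : ∀ (X Y η : ∀ t s : ℤ, Matrix (Fin (p t)) (Fin (p s)) Ω)
      (g : ∀ t : ℤ, Matrix (Fin (p t)) (Fin (p t)) Ω),
      (∀ t s : ℤ, ¬(0 ≤ s ∧ s ≤ (m : ℤ) ∧ s - 1 ≤ t ∧ t ≤ (m : ℤ)) → X t s = 0) →
      (∀ t s : ℤ, ¬(0 ≤ s ∧ s ≤ t ∧ t ≤ (m : ℤ)) → η t s = 0) →
      (∀ t : ℤ, g t * (1 + η t t) = 1 ∧ (1 + η t t) * g t = 1) →
      (∀ t s : ℤ, Y t s = g t *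
        ((η t s).map ⇑d + (∑ u ∈ Finset.Icc s (t + 1), X t u * η u s)
          - (∑ u ∈ Finset.Icc (s - 1) (t - 1),
              ((-1 : ℤ) ^ (t - u).natAbs) • (η t u * Y u s))
          + X t s)) →
      (∀ t s : ℤ, ¬(0 ≤ s ∧ s ≤ (m : ℤ) ∧ s - 1 ≤ t ∧ t ≤ (m : ℤ)) → Y t s = 0) ∧
      (∀ t s : ℤ, Y t s + ∑ u ∈ Finset.Icc (-1 : ℤ) ((m : ℤ)), ((-1 : ℤ) ^ (t - u).natAbs) • (η t u * Y u s)
        = (η t s).map ⇑d + (∑ u ∈ Finset.Icc (-1 : ℤ) ((m : ℤ)), X t u * η u s) + X t s) := by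
    intro X Y η g hX hη hg hYdef
    have Ysupp : ∀ t s : ℤ, ¬(0 ≤ s ∧ s ≤ (m : ℤ) ∧ s - 1 ≤ t ∧ t ≤ (m : ℤ)) → Y t s = 0 := by
      have stepY : ∀ t : ℤ,
          (∀ u : ℤ, 0 ≤ u → u < t → ∀ s : ℤ,
            ¬(0 ≤ s ∧ s ≤ (m : ℤ) ∧ s - 1 ≤ u ∧ u ≤ (m : ℤ)) → Y u s = 0) →
          ∀ s : ℤ, ¬(0 ≤ s ∧ s ≤ (m : ℤ) ∧ s - 1 ≤ t ∧ t ≤ (m : ℤ)) → Y t s = 0 := by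
        intro t ih s hc
        rw [hYdef t s]
        have hz1 : (η t s).map ⇑d = (0 : Matrix (Fin (p t)) (Fin (p s)) Ω) := by
          rw [hη t s (by omega)]
          ext i j
          simp
        have hz2 : ∑ u ∈ Finset.Icc s (t + 1), X t u * η u s = 0 := by
          refine Finset.sum_eq_zero fun u hu => ?_
          rw [Finset.mem_Icc] at hu
          by_cases hcu : 0 ≤ s ∧ s ≤ u ∧ u ≤ (m : ℤ)
          · rw [hX t u (by omega), Matrix.zero_mul]
          · rw [hη u s hcu, Matrix.mul_zero]
        have hz3 : ∑ u ∈ Finset.Icc (s - 1) (t - 1),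
            ((-1 : ℤ) ^ (t - u).natAbs) • (η t u * Y u s) = 0 := by
          refine Finset.sum_eq_zero fun u hu => ?_
          rw [Finset.mem_Icc] at hu
          by_cases hcu : 0 ≤ u ∧ u ≤ t ∧ t ≤ (m : ℤ)
          · rw [ih u hcu.1 (by omega) s (by omega), Matrix.mul_zero, smul_zero]
          · rw [hη t u hcu, Matrix.zero_mul, smul_zero]
        rw [hz1, hz2, hz3, hX t s hc]
        simp
      have main : ∀ n : ℕ, ∀ t : ℤ, t < (n : ℤ) → ∀ s : ℤ,
          ¬(0 ≤ s ∧ s ≤ (m : ℤ) ∧ s - 1 ≤ t ∧ t ≤ (m : ℤ)) → Y t s = 0 := by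
        intro n
        induction n with
        | zero =>
            intro t ht s hc
            exact stepY t (fun u hu0 hut s' _ => absurd hu0 (by omega)) s hc
        | succ n ih =>
            intro t ht s hc
            exact stepY t (fun u hu0 hut s' hc' => ih u (by omega) s' hc') s hc
      exact fun t s hc => main (t.toNat + 1) t (by omega) s hc
    refine ⟨Ysupp, fun t s => ?_⟩
    have h0 : Y t s + η t t * Y t s =
        (η t s).map ⇑d + (∑ u ∈ Finset.Icc s (t + 1), X t u * η u s)
          - (∑ u ∈ Finset.Icc (s - 1) (t - 1),
              ((-1 : ℤ) ^ (t - u).natAbs) • (η t u * Y u s)) + X t s := by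
      have h : (1 + η t t) * Y t s =
          (η t s).map ⇑d + (∑ u ∈ Finset.Icc s (t + 1), X t u * η u s)
            - (∑ u ∈ Finset.Icc (s - 1) (t - 1),
                ((-1 : ℤ) ^ (t - u).natAbs) • (η t u * Y u s)) + X t s := by
        rw [hYdef t s, ← Matrix.mul_assoc, (hg t).2, Matrix.one_mul]
      calc Y t s + η t t * Y t s = (1 + η t t) * Y t s := by
            rw [Matrix.add_mul, Matrix.one_mul]
        _ = _ := h
    have hd1 : Disjoint (Finset.Icc (s - 1) (t - 1)) ({t} : Finset ℤ) := by
      simp only [Finset.disjoint_singleton_right, Finset.mem_Icc]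
      omega
    have e1 : ∑ u ∈ Finset.Icc (-1 : ℤ) ((m : ℤ)), ((-1 : ℤ) ^ (t - u).natAbs) • (η t u * Y u s)
        = (∑ u ∈ Finset.Icc (s - 1) (t - 1), ((-1 : ℤ) ^ (t - u).natAbs) • (η t u * Y u s))
          + η t t * Y t s := by
      calc ∑ u ∈ Finset.Icc (-1 : ℤ) ((m : ℤ)), ((-1 : ℤ) ^ (t - u).natAbs) • (η t u * Y u s)
          = ∑ u ∈ Finset.Icc (s - 1) (t - 1) ∪ {t}, ((-1 : ℤ) ^ (t - u).natAbs) • (η t u * Y u s) := by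
            refine stmt6_sum_swap _ _ _ ?_ ?_
            · intro u hu hnot
              rw [Finset.mem_Icc] at hu
              rw [Finset.mem_union, Finset.mem_Icc, Finset.mem_singleton] at hnot
              by_cases h1 : s - 1 ≤ u
              · rw [hη t u (by omega), Matrix.zero_mul, smul_zero]
              · rw [Ysupp u s (by omega), Matrix.mul_zero, smul_zero]
            · intro u hu hnot
              rw [Finset.mem_union, Finset.mem_Icc, Finset.mem_singleton] at hu
              rw [Finset.mem_Icc] at hnot
              rw [hη t u (by omega), Matrix.zero_mul, smul_zero]
        _ = _ := by
            rw [Finset.sum_union hd1, Finset.sum_singleton, sub_self, Int.natAbs_zero,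
              pow_zero, one_smul]
    have e2 : ∑ u ∈ Finset.Icc s (t + 1), X t u * η u s
        = ∑ u ∈ Finset.Icc (-1 : ℤ) ((m : ℤ)), X t u * η u s := by
      refine stmt6_sum_swap _ _ _ ?_ ?_
      · intro u hu hnot
        rw [Finset.mem_Icc] at hu
        rw [Finset.mem_Icc] at hnot
        rw [hη u s (by omega), Matrix.mul_zero]
      · intro u hu hnot
        rw [Finset.mem_Icc] at hu
        rw [Finset.mem_Icc] at hnot
        by_cases h1 : u ≤ t + 1
        · rw [hη u s (by omega), Matrix.mul_zero]
        · rw [hX t u (by omega), Matrix.zero_mul]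
    calc Y t s + ∑ u ∈ Finset.Icc (-1 : ℤ) ((m : ℤ)), ((-1 : ℤ) ^ (t - u).natAbs) • (η t u * Y u s)
        = Y t s + ((∑ u ∈ Finset.Icc (s - 1) (t - 1), ((-1 : ℤ) ^ (t - u).natAbs) • (η t u * Y u s))
            + η t t * Y t s) := by rw [e1]
      _ = (Y t s + η t t * Y t s)
            + ∑ u ∈ Finset.Icc (s - 1) (t - 1), ((-1 : ℤ) ^ (t - u).natAbs) • (η t u * Y u s) := by abel
      _ = ((η t s).map ⇑d + (∑ u ∈ Finset.Icc s (t + 1), X t u * η u s)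
            - (∑ u ∈ Finset.Icc (s - 1) (t - 1), ((-1 : ℤ) ^ (t - u).natAbs) • (η t u * Y u s)) + X t s)
            + ∑ u ∈ Finset.Icc (s - 1) (t - 1), ((-1 : ℤ) ^ (t - u).natAbs) • (η t u * Y u s) := by rw [h0]
      _ = (η t s).map ⇑d + (∑ u ∈ Finset.Icc s (t + 1), X t u * η u s) + X t s := by abel
      _ = (η t s).map ⇑d + (∑ u ∈ Finset.Icc (-1 : ℤ) ((m : ℤ)), X t u * η u s) + X t s := by rw [e2]
  obtain ⟨hω₁supp, AS⟩ := key ω ω₁ η₁ gi₁ hωs hη₁supp hgi₁ hω₁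
  obtain ⟨hω₂supp, BS⟩ := key ω₁ ω₂ η₂ gi₂ hω₁supp hη₂supp hgi₂ hω₂
  have hη₁₂supp : ∀ t s : ℤ, ¬(0 ≤ s ∧ s ≤ t ∧ t ≤ (m : ℤ)) → η₁₂ t s = 0 := by
    intro t s hc
    rw [hη₁₂ t s, hη₁supp t s hc, hη₂supp t s hc]
    have hz : ∑ u ∈ Finset.Icc s t, η₁ t u * η₂ u s = 0 := by
      refine Finset.sum_eq_zero fun u hu => ?_
      rw [Finset.mem_Icc] at hu
      by_cases h2 : 0 ≤ s ∧ s ≤ u ∧ u ≤ (m : ℤ)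
      · rw [hη₁supp t u (by omega), Matrix.zero_mul]
      · rw [hη₂supp u s h2, Matrix.mul_zero]
    rw [hz]
    simp
  obtain ⟨hω₁₂supp, CS⟩ := key ω ω₁₂ η₁₂ gi₁₂ hωs hη₁₂supp hgi₁₂ hω₁₂
  have ES : ∀ t s : ℤ, η₁₂ t s = η₁ t s + η₂ t s + ∑ u ∈ Finset.Icc (-1 : ℤ) ((m : ℤ)), η₁ t u * η₂ u s := by
    intro t s
    rw [hη₁₂ t s]
    congr 1
    refine stmt6_sum_swap _ _ _ ?_ ?_
    · intro u hu hnot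
      rw [Finset.mem_Icc] at hu
      rw [Finset.mem_Icc] at hnot
      rw [hη₂supp u s (by omega), Matrix.mul_zero]
    · intro u hu hnot
      rw [Finset.mem_Icc] at hu
      rw [Finset.mem_Icc] at hnot
      by_cases h1 : s ≤ u
      · rw [hη₁supp t u (by omega), Matrix.zero_mul]
      · rw [hη₂supp u s (by omega), Matrix.mul_zero]
  have CS2 : ∀ t s : ℤ, ω₂ t s + ∑ u ∈ Finset.Icc (-1 : ℤ) ((m : ℤ)), ((-1 : ℤ) ^ (t - u).natAbs) • (η₁₂ t u * ω₂ u s)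
      = (η₁₂ t s).map ⇑d + (∑ u ∈ Finset.Icc (-1 : ℤ) ((m : ℤ)), ω t u * η₁₂ u s) + ω t s := by
    intro t s
    have h1 : ∑ u ∈ Finset.Icc (-1 : ℤ) ((m : ℤ)), ((-1 : ℤ) ^ (t - u).natAbs) • (η₁₂ t u * ω₂ u s)
        = (∑ u ∈ Finset.Icc (-1 : ℤ) ((m : ℤ)), ((-1 : ℤ) ^ (t - u).natAbs) • (η₁ t u * ω₂ u s))
          + (∑ u ∈ Finset.Icc (-1 : ℤ) ((m : ℤ)), ((-1 : ℤ) ^ (t - u).natAbs) • (η₂ t u * ω₂ u s))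
          + ∑ u ∈ Finset.Icc (-1 : ℤ) ((m : ℤ)), ∑ v ∈ Finset.Icc (-1 : ℤ) ((m : ℤ)), ((-1 : ℤ) ^ (t - u).natAbs) • ((η₁ t v * η₂ v u) * ω₂ u s) := by
      rw [← Finset.sum_add_distrib, ← Finset.sum_add_distrib]
      refine Finset.sum_congr rfl fun u _ => ?_
      rw [ES t u, Matrix.add_mul, Matrix.add_mul, smul_add, smul_add, Matrix.sum_mul,
        Finset.smul_sum]
    have h2 : ∑ u ∈ Finset.Icc (-1 : ℤ) ((m : ℤ)), ∑ v ∈ Finset.Icc (-1 : ℤ) ((m : ℤ)), ((-1 : ℤ) ^ (t - u).natAbs) • ((η₁ t v * η₂ v u) * ω₂ u s)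
        = ∑ v ∈ Finset.Icc (-1 : ℤ) ((m : ℤ)), ((-1 : ℤ) ^ (t - v).natAbs) • (η₁ t v * ∑ u ∈ Finset.Icc (-1 : ℤ) ((m : ℤ)), ((-1 : ℤ) ^ (v - u).natAbs) • (η₂ v u * ω₂ u s)) := by
      rw [Finset.sum_comm]
      refine Finset.sum_congr rfl fun v _ => ?_
      rw [Matrix.mul_sum, Finset.smul_sum]
      refine Finset.sum_congr rfl fun u _ => ?_
      rw [Matrix.mul_smul, smul_smul, ← stmt6_eps_add (t - v) (v - u),
        show t - v + (v - u) = t - u from by ring, Matrix.mul_assoc]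
    have h3 : (∑ u ∈ Finset.Icc (-1 : ℤ) ((m : ℤ)), ((-1 : ℤ) ^ (t - u).natAbs) • (η₁ t u * ω₂ u s))
          + ∑ v ∈ Finset.Icc (-1 : ℤ) ((m : ℤ)), ((-1 : ℤ) ^ (t - v).natAbs) • (η₁ t v * ∑ u ∈ Finset.Icc (-1 : ℤ) ((m : ℤ)), ((-1 : ℤ) ^ (v - u).natAbs) • (η₂ v u * ω₂ u s))
        = ∑ v ∈ Finset.Icc (-1 : ℤ) ((m : ℤ)), ((-1 : ℤ) ^ (t - v).natAbs) • (η₁ t v *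
            ((η₂ v s).map ⇑d + (∑ u ∈ Finset.Icc (-1 : ℤ) ((m : ℤ)), ω₁ v u * η₂ u s) + ω₁ v s)) := by
      rw [← Finset.sum_add_distrib]
      refine Finset.sum_congr rfl fun v _ => ?_
      rw [← BS v s, Matrix.mul_add, smul_add]
    have hmid : ∑ v ∈ Finset.Icc (-1 : ℤ) ((m : ℤ)), ((-1 : ℤ) ^ (t - v).natAbs) • (η₁ t v * ∑ u ∈ Finset.Icc (-1 : ℤ) ((m : ℤ)), ω₁ v u * η₂ u s)
        = ∑ u ∈ Finset.Icc (-1 : ℤ) ((m : ℤ)), (∑ v ∈ Finset.Icc (-1 : ℤ) ((m : ℤ)), ((-1 : ℤ) ^ (t - v).natAbs) • (η₁ t v * ω₁ v u)) * η₂ u s := by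
      calc ∑ v ∈ Finset.Icc (-1 : ℤ) ((m : ℤ)), ((-1 : ℤ) ^ (t - v).natAbs) • (η₁ t v * ∑ u ∈ Finset.Icc (-1 : ℤ) ((m : ℤ)), ω₁ v u * η₂ u s)
          = ∑ v ∈ Finset.Icc (-1 : ℤ) ((m : ℤ)), ∑ u ∈ Finset.Icc (-1 : ℤ) ((m : ℤ)), ((-1 : ℤ) ^ (t - v).natAbs) • (η₁ t v * (ω₁ v u * η₂ u s)) := by
            refine Finset.sum_congr rfl fun v _ => ?_
            rw [Matrix.mul_sum, Finset.smul_sum]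
        _ = ∑ u ∈ Finset.Icc (-1 : ℤ) ((m : ℤ)), ∑ v ∈ Finset.Icc (-1 : ℤ) ((m : ℤ)), ((-1 : ℤ) ^ (t - v).natAbs) • (η₁ t v * (ω₁ v u * η₂ u s)) := Finset.sum_comm
        _ = ∑ u ∈ Finset.Icc (-1 : ℤ) ((m : ℤ)), (∑ v ∈ Finset.Icc (-1 : ℤ) ((m : ℤ)), ((-1 : ℤ) ^ (t - v).natAbs) • (η₁ t v * ω₁ v u)) * η₂ u s := by
            refine Finset.sum_congr rfl fun u _ => ?_
            rw [Matrix.sum_mul]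
            refine Finset.sum_congr rfl fun v _ => ?_
            rw [Matrix.smul_mul, Matrix.mul_assoc]
    have h4 : ∑ v ∈ Finset.Icc (-1 : ℤ) ((m : ℤ)), ((-1 : ℤ) ^ (t - v).natAbs) • (η₁ t v *
            ((η₂ v s).map ⇑d + (∑ u ∈ Finset.Icc (-1 : ℤ) ((m : ℤ)), ω₁ v u * η₂ u s) + ω₁ v s))
        = (∑ v ∈ Finset.Icc (-1 : ℤ) ((m : ℤ)), ((-1 : ℤ) ^ (t - v).natAbs) • (η₁ t v * (η₂ v s).map ⇑d))
          + (∑ u ∈ Finset.Icc (-1 : ℤ) ((m : ℤ)), (∑ v ∈ Finset.Icc (-1 : ℤ) ((m : ℤ)), ((-1 : ℤ) ^ (t - v).natAbs) • (η₁ t v * ω₁ v u)) * η₂ u s)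
          + ∑ v ∈ Finset.Icc (-1 : ℤ) ((m : ℤ)), ((-1 : ℤ) ^ (t - v).natAbs) • (η₁ t v * ω₁ v s) := by
      rw [← hmid, ← Finset.sum_add_distrib, ← Finset.sum_add_distrib]
      refine Finset.sum_congr rfl fun v _ => ?_
      rw [Matrix.mul_add, Matrix.mul_add, smul_add, smul_add]
    have h5 : (∑ u ∈ Finset.Icc (-1 : ℤ) ((m : ℤ)), ω₁ t u * η₂ u s)
          + ∑ u ∈ Finset.Icc (-1 : ℤ) ((m : ℤ)), (∑ v ∈ Finset.Icc (-1 : ℤ) ((m : ℤ)), ((-1 : ℤ) ^ (t - v).natAbs) • (η₁ t v * ω₁ v u)) * η₂ u s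
        = (∑ u ∈ Finset.Icc (-1 : ℤ) ((m : ℤ)), (η₁ t u).map ⇑d * η₂ u s)
          + (∑ u ∈ Finset.Icc (-1 : ℤ) ((m : ℤ)), ∑ v ∈ Finset.Icc (-1 : ℤ) ((m : ℤ)), (ω t v * η₁ v u) * η₂ u s)
          + ∑ u ∈ Finset.Icc (-1 : ℤ) ((m : ℤ)), ω t u * η₂ u s := by
      rw [← Finset.sum_add_distrib, ← Finset.sum_add_distrib, ← Finset.sum_add_distrib]
      refine Finset.sum_congr rfl fun u _ => ?_
      rw [← Matrix.add_mul, AS t u, Matrix.add_mul, Matrix.add_mul, Matrix.sum_mul]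
    have h7 : (η₁₂ t s).map ⇑d
        = ((η₁ t s).map ⇑d + (η₂ t s).map ⇑d)
          + ((∑ u ∈ Finset.Icc (-1 : ℤ) ((m : ℤ)), (η₁ t u).map ⇑d * η₂ u s)
            + ∑ u ∈ Finset.Icc (-1 : ℤ) ((m : ℤ)), ((-1 : ℤ) ^ (t - u).natAbs) • (η₁ t u * (η₂ u s).map ⇑d)) := by
      rw [ES t s]
      have e : (η₁ t s + η₂ t s + ∑ u ∈ Finset.Icc (-1 : ℤ) ((m : ℤ)), η₁ t u * η₂ u s).map ⇑d
          = (η₁ t s).map ⇑d + (η₂ t s).map ⇑d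
            + ∑ u ∈ Finset.Icc (-1 : ℤ) ((m : ℤ)), (η₁ t u * η₂ u s).map ⇑d := by
        ext i j
        simp [Matrix.map_apply, Matrix.add_apply, Matrix.sum_apply]
      rw [e]
      have e2 : ∑ u ∈ Finset.Icc (-1 : ℤ) ((m : ℤ)), (η₁ t u * η₂ u s).map ⇑d
          = ∑ u ∈ Finset.Icc (-1 : ℤ) ((m : ℤ)), ((η₁ t u).map ⇑d * η₂ u s
              + ((-1 : ℤ) ^ (t - u).natAbs) • (η₁ t u * (η₂ u s).map ⇑d)) := by
        refine Finset.sum_congr rfl fun u _ => ?_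
        rcases le_or_gt u t with h | h
        · rw [stmt6_mleib 𝒜 d hleib ((t - u).toNat) (η₁ t u) (η₂ u s)
              (fun i j => hη₁deg t u i j),
            show (t - u).toNat = (t - u).natAbs from by omega]
        · rw [hη₁supp t u (by omega)]
          ext i j
          simp
      rw [e2, Finset.sum_add_distrib]
    have h8 : ∑ u ∈ Finset.Icc (-1 : ℤ) ((m : ℤ)), ω t u * η₁₂ u s
        = ((∑ u ∈ Finset.Icc (-1 : ℤ) ((m : ℤ)), ω t u * η₁ u s) + ∑ u ∈ Finset.Icc (-1 : ℤ) ((m : ℤ)), ω t u * η₂ u s)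
          + ∑ u ∈ Finset.Icc (-1 : ℤ) ((m : ℤ)), ∑ v ∈ Finset.Icc (-1 : ℤ) ((m : ℤ)), ω t u * (η₁ u v * η₂ v s) := by
      rw [← Finset.sum_add_distrib, ← Finset.sum_add_distrib]
      refine Finset.sum_congr rfl fun u _ => ?_
      rw [ES u s, Matrix.mul_add, Matrix.mul_add, Matrix.mul_sum]
    have h9 : ∑ u ∈ Finset.Icc (-1 : ℤ) ((m : ℤ)), ∑ v ∈ Finset.Icc (-1 : ℤ) ((m : ℤ)), ω t u * (η₁ u v * η₂ v s)
        = ∑ u ∈ Finset.Icc (-1 : ℤ) ((m : ℤ)), ∑ v ∈ Finset.Icc (-1 : ℤ) ((m : ℤ)), (ω t v * η₁ v u) * η₂ u s := by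
      rw [Finset.sum_comm]
      exact Finset.sum_congr rfl fun u _ => Finset.sum_congr rfl fun v _ =>
        (Matrix.mul_assoc _ _ _).symm
    calc ω₂ t s + ∑ u ∈ Finset.Icc (-1 : ℤ) ((m : ℤ)), ((-1 : ℤ) ^ (t - u).natAbs) • (η₁₂ t u * ω₂ u s)
        = ω₂ t s + ((∑ u ∈ Finset.Icc (-1 : ℤ) ((m : ℤ)), ((-1 : ℤ) ^ (t - u).natAbs) • (η₁ t u * ω₂ u s))
            + (∑ u ∈ Finset.Icc (-1 : ℤ) ((m : ℤ)), ((-1 : ℤ) ^ (t - u).natAbs) • (η₂ t u * ω₂ u s))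
            + ∑ v ∈ Finset.Icc (-1 : ℤ) ((m : ℤ)), ((-1 : ℤ) ^ (t - v).natAbs) • (η₁ t v * ∑ u ∈ Finset.Icc (-1 : ℤ) ((m : ℤ)), ((-1 : ℤ) ^ (v - u).natAbs) • (η₂ v u * ω₂ u s))) := by
          rw [h1, h2]
      _ = (ω₂ t s + ∑ u ∈ Finset.Icc (-1 : ℤ) ((m : ℤ)), ((-1 : ℤ) ^ (t - u).natAbs) • (η₂ t u * ω₂ u s))
            + ((∑ u ∈ Finset.Icc (-1 : ℤ) ((m : ℤ)), ((-1 : ℤ) ^ (t - u).natAbs) • (η₁ t u * ω₂ u s))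
              + ∑ v ∈ Finset.Icc (-1 : ℤ) ((m : ℤ)), ((-1 : ℤ) ^ (t - v).natAbs) • (η₁ t v * ∑ u ∈ Finset.Icc (-1 : ℤ) ((m : ℤ)), ((-1 : ℤ) ^ (v - u).natAbs) • (η₂ v u * ω₂ u s))) := by
          abel
      _ = ((η₂ t s).map ⇑d + (∑ u ∈ Finset.Icc (-1 : ℤ) ((m : ℤ)), ω₁ t u * η₂ u s) + ω₁ t s)
            + ∑ v ∈ Finset.Icc (-1 : ℤ) ((m : ℤ)), ((-1 : ℤ) ^ (t - v).natAbs) • (η₁ t v *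
                ((η₂ v s).map ⇑d + (∑ u ∈ Finset.Icc (-1 : ℤ) ((m : ℤ)), ω₁ v u * η₂ u s) + ω₁ v s)) := by
          rw [BS t s, h3]
      _ = ((η₂ t s).map ⇑d + (∑ u ∈ Finset.Icc (-1 : ℤ) ((m : ℤ)), ω₁ t u * η₂ u s) + ω₁ t s)
            + ((∑ v ∈ Finset.Icc (-1 : ℤ) ((m : ℤ)), ((-1 : ℤ) ^ (t - v).natAbs) • (η₁ t v * (η₂ v s).map ⇑d))
              + (∑ u ∈ Finset.Icc (-1 : ℤ) ((m : ℤ)), (∑ v ∈ Finset.Icc (-1 : ℤ) ((m : ℤ)), ((-1 : ℤ) ^ (t - v).natAbs) • (η₁ t v * ω₁ v u)) * η₂ u s)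
              + ∑ v ∈ Finset.Icc (-1 : ℤ) ((m : ℤ)), ((-1 : ℤ) ^ (t - v).natAbs) • (η₁ t v * ω₁ v s)) := by
          rw [h4]
      _ = (ω₁ t s + ∑ v ∈ Finset.Icc (-1 : ℤ) ((m : ℤ)), ((-1 : ℤ) ^ (t - v).natAbs) • (η₁ t v * ω₁ v s))
            + ((∑ u ∈ Finset.Icc (-1 : ℤ) ((m : ℤ)), ω₁ t u * η₂ u s)
              + ∑ u ∈ Finset.Icc (-1 : ℤ) ((m : ℤ)), (∑ v ∈ Finset.Icc (-1 : ℤ) ((m : ℤ)), ((-1 : ℤ) ^ (t - v).natAbs) • (η₁ t v * ω₁ v u)) * η₂ u s)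
            + ((η₂ t s).map ⇑d + ∑ v ∈ Finset.Icc (-1 : ℤ) ((m : ℤ)), ((-1 : ℤ) ^ (t - v).natAbs) • (η₁ t v * (η₂ v s).map ⇑d)) := by
          abel
      _ = ((η₁ t s).map ⇑d + (∑ u ∈ Finset.Icc (-1 : ℤ) ((m : ℤ)), ω t u * η₁ u s) + ω t s)
            + ((∑ u ∈ Finset.Icc (-1 : ℤ) ((m : ℤ)), (η₁ t u).map ⇑d * η₂ u s)
              + (∑ u ∈ Finset.Icc (-1 : ℤ) ((m : ℤ)), ∑ v ∈ Finset.Icc (-1 : ℤ) ((m : ℤ)), (ω t v * η₁ v u) * η₂ u s)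
              + ∑ u ∈ Finset.Icc (-1 : ℤ) ((m : ℤ)), ω t u * η₂ u s)
            + ((η₂ t s).map ⇑d + ∑ v ∈ Finset.Icc (-1 : ℤ) ((m : ℤ)), ((-1 : ℤ) ^ (t - v).natAbs) • (η₁ t v * (η₂ v s).map ⇑d)) := by
          rw [AS t s, h5]
      _ = (η₁₂ t s).map ⇑d + (∑ u ∈ Finset.Icc (-1 : ℤ) ((m : ℤ)), ω t u * η₁₂ u s) + ω t s := by
          rw [h7, h8, h9]
          abel
  have hsub : ∀ t s : ℤ, (ω₂ t s - ω₁₂ t s)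
      + ∑ u ∈ Finset.Icc (-1 : ℤ) ((m : ℤ)), ((-1 : ℤ) ^ (t - u).natAbs) • (η₁₂ t u * (ω₂ u s - ω₁₂ u s)) = 0 := by
    intro t s
    have h := (CS2 t s).trans (CS t s).symm
    have hd : ∑ u ∈ Finset.Icc (-1 : ℤ) ((m : ℤ)), ((-1 : ℤ) ^ (t - u).natAbs) • (η₁₂ t u * (ω₂ u s - ω₁₂ u s))
        = (∑ u ∈ Finset.Icc (-1 : ℤ) ((m : ℤ)), ((-1 : ℤ) ^ (t - u).natAbs) • (η₁₂ t u * ω₂ u s))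
          - ∑ u ∈ Finset.Icc (-1 : ℤ) ((m : ℤ)), ((-1 : ℤ) ^ (t - u).natAbs) • (η₁₂ t u * ω₁₂ u s) := by
      rw [← Finset.sum_sub_distrib]
      refine Finset.sum_congr rfl fun u _ => ?_
      rw [Matrix.mul_sub, smul_sub]
    rw [hd]
    have he : (ω₂ t s - ω₁₂ t s)
        + ((∑ u ∈ Finset.Icc (-1 : ℤ) ((m : ℤ)), ((-1 : ℤ) ^ (t - u).natAbs) • (η₁₂ t u * ω₂ u s))
          - ∑ u ∈ Finset.Icc (-1 : ℤ) ((m : ℤ)), ((-1 : ℤ) ^ (t - u).natAbs) • (η₁₂ t u * ω₁₂ u s))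
        = (ω₂ t s + ∑ u ∈ Finset.Icc (-1 : ℤ) ((m : ℤ)), ((-1 : ℤ) ^ (t - u).natAbs) • (η₁₂ t u * ω₂ u s))
          - (ω₁₂ t s + ∑ u ∈ Finset.Icc (-1 : ℤ) ((m : ℤ)), ((-1 : ℤ) ^ (t - u).natAbs) • (η₁₂ t u * ω₁₂ u s)) := by abel
    rw [he, h, sub_self]
  have stepU : ∀ t : ℤ, (∀ u : ℤ, 0 ≤ u → u < t → ∀ s : ℤ, ω₂ u s = ω₁₂ u s) →
      ∀ s : ℤ, ω₂ t s = ω₁₂ t s := by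
    intro t ih s
    have h := hsub t s
    have hone : ∑ u ∈ Finset.Icc (-1 : ℤ) ((m : ℤ)), ((-1 : ℤ) ^ (t - u).natAbs) • (η₁₂ t u * (ω₂ u s - ω₁₂ u s))
        = η₁₂ t t * (ω₂ t s - ω₁₂ t s) := by
      have e : ∑ u ∈ Finset.Icc (-1 : ℤ) ((m : ℤ)), ((-1 : ℤ) ^ (t - u).natAbs) • (η₁₂ t u * (ω₂ u s - ω₁₂ u s))
          = ∑ u ∈ ({t} : Finset ℤ), ((-1 : ℤ) ^ (t - u).natAbs) • (η₁₂ t u * (ω₂ u s - ω₁₂ u s)) := by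
        refine stmt6_sum_swap _ _ _ ?_ ?_
        · intro u hu hnot
          rw [Finset.mem_Icc] at hu
          rw [Finset.mem_singleton] at hnot
          by_cases hcu : 0 ≤ u ∧ u ≤ t ∧ t ≤ (m : ℤ)
          · rw [ih u hcu.1 (by omega) s, sub_self, Matrix.mul_zero, smul_zero]
          · rw [hη₁₂supp t u hcu, Matrix.zero_mul, smul_zero]
        · intro u hu hnot
          rw [Finset.mem_singleton] at hu
          rw [Finset.mem_Icc] at hnot
          rw [hη₁₂supp t u (by omega), Matrix.zero_mul, smul_zero]
      rw [e, Finset.sum_singleton, sub_self, Int.natAbs_zero, pow_zero, one_smul]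
    rw [hone] at h
    have h2 : (1 + η₁₂ t t) * (ω₂ t s - ω₁₂ t s) = 0 := by
      rw [Matrix.add_mul, Matrix.one_mul]
      exact h
    have h3 : ω₂ t s - ω₁₂ t s = 0 := by
      calc ω₂ t s - ω₁₂ t s
          = (gi₁₂ t * (1 + η₁₂ t t)) * (ω₂ t s - ω₁₂ t s) := by
            rw [(hgi₁₂ t).1, Matrix.one_mul]
        _ = gi₁₂ t * ((1 + η₁₂ t t) * (ω₂ t s - ω₁₂ t s)) := Matrix.mul_assoc _ _ _
        _ = 0 := by rw [h2, Matrix.mul_zero]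
    exact sub_eq_zero.mp h3
  have main2 : ∀ n : ℕ, ∀ t : ℤ, t < (n : ℤ) → ∀ s : ℤ, ω₂ t s = ω₁₂ t s := by
    intro n
    induction n with
    | zero =>
        intro t ht
        exact stepU t (fun u hu0 hut s => absurd hu0 (by omega))
    | succ n ih =>
        intro t ht
        exact stepU t (fun u hu0 hut s => ih u (by omega) s)
  funext t s
  exact main2 (t.toNat + 1) t (by omega) s
end

section
/- The relations ∂̄_J ω^{s,k} + Σ_{j=−1}^{k+1}(−1)^{k−j} ω^{s+j,k−j}∧ω^{s,j} = 0 (k ≥ 0) are necessary conditions for solvability of the quasi-linear system ∂̄_J η^{s,k} + Σ_{j=0}^{k+1} ω^{s+j,k−j}∧η^{s,j} + (−1)^k η^{s−1,k+1}∧ω^{s,−1}_η + ω^{s,k} = 0: if η solves the system, then the ω^{s,k} satisfy these integrability relations. -/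
open Finset

abbrev eps (e : ℤ) : ℤ := (-1) ^ e.natAbs

lemma eps_eq (a : ℤ) : eps a = if Even a then 1 else -1 := by
  rcases Int.even_or_odd a with h | h
  · rw [if_pos h]; exact Even.neg_one_pow (Int.natAbs_even.mpr h)
  · rw [if_neg (by simpa [Int.not_even_iff_odd] using h)]
    exact Odd.neg_one_pow (Int.natAbs_odd.mpr h)

lemma eps_add (a b : ℤ) : eps (a + b) = eps a * eps b := by
  by_cases ha : Even a <;> by_cases hb : Even b <;>
    simp [eps_eq, Int.even_add, ha, hb]

lemma eps_succ (a : ℤ) : eps (a + 1) = -eps a := by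
  rw [eps_add]; norm_num [eps_eq]

lemma eps_zero : eps 0 = 1 := by norm_num [eps_eq]

lemma eps_neg_one : eps (-1) = -1 := by norm_num [eps_eq]

lemma eps_sq (a : ℤ) : eps a * eps a = 1 := by
  by_cases h : Even a <;> simp [eps_eq, h]

lemma eps_toNat {e : ℤ} (h : 0 ≤ e) : ((-1 : ℤ)) ^ e.toNat = eps e := by
  have : e.toNat = e.natAbs := by omega
  rw [this]

def Kd {Ω : Type*} [One Ω] [Zero Ω] (p : ℤ → ℕ) (t s : ℤ) :
    Matrix (Fin (p t)) (Fin (p s)) Ω :=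
  Matrix.of fun i j => if (t, (i : ℕ)) = (s, (j : ℕ)) then 1 else 0

lemma Kd_self {Ω : Type*} [One Ω] [Zero Ω] (p : ℤ → ℕ) (t : ℤ) :
    (Kd (Ω := Ω) p t t) = 1 := by
  ext i j
  simp [Kd, Matrix.one_apply, Fin.val_inj]

lemma Kd_ne {Ω : Type*} [One Ω] [Zero Ω] (p : ℤ → ℕ) {t s : ℤ} (h : t ≠ s) :
    (Kd (Ω := Ω) p t s) = 0 := by
  ext i j
  simp [Kd, Prod.ext_iff, h]

/-- The relations `∂̄_J ω^{s,k} + Σ_{j=−1}^{k+1}(−1)^{k−j} ω^{s+j,k−j}∧ω^{s,j} = 0`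
(`k ≥ 0`) are necessary conditions for solvability of the quasi-linear system
`∂̄_J η^{s,k} + Σ_{j=0}^{k+1} ω^{s+j,k−j}∧η^{s,j} + (−1)^k η^{s−1,k+1}∧ω^{s,−1}_η + ω^{s,k} = 0`:
if `η` solves the system, then the `ω^{s,k}` satisfy these integrability relations.

Encoding as in the recalibration formalism (blocks indexed by (target, source), `ω t s`
corresponding to `ω^{s,k}` with `t = s+k`); the given data satisfy
`ω^{s−1,−1}·ω^{s,−1} = 0` for `s = 2,…,m` and the commutation identities
`∂̄_J ω^{s,−1} + ω^{s−1,0}·ω^{s,−1} = ω^{s,−1}·ω^{s,0}` for `s = 1,…,m`; `gi t` is the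
inverse of `I + η^{t,0}` and `ω^{s,−1}_η = (I+η^{s−1,0})⁻¹·ω^{s,−1}·(I+η^{s,0})`. -/
theorem stmt8 {Ω : Type*} [Ring Ω]
    (𝒜 : ℕ → AddSubgroup Ω) (h1mem : (1 : Ω) ∈ 𝒜 0)
    (hmulmem : ∀ (a b : ℕ) (x y : Ω), x ∈ 𝒜 a → y ∈ 𝒜 b → x * y ∈ 𝒜 (a + b))
    (d : Ω →+ Ω) (hd2 : ∀ x : Ω, d (d x) = 0)
    (hdmem : ∀ (a : ℕ) (x : Ω), x ∈ 𝒜 a → d x ∈ 𝒜 (a + 1))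
    (hleib : ∀ (a : ℕ) (x y : Ω), x ∈ 𝒜 a →
      d (x * y) = d x * y + ((-1 : ℤ) ^ a) • (x * d y))
    (m : ℕ) (p : ℤ → ℕ)
    (ω η : ∀ t s : ℤ, Matrix (Fin (p t)) (Fin (p s)) Ω)
    (gi : ∀ t : ℤ, Matrix (Fin (p t)) (Fin (p t)) Ω)
    -- supports and degrees
    (hωsupp : ∀ t s : ℤ,
      ¬(0 ≤ s ∧ s ≤ (m : ℤ) ∧ s - 1 ≤ t ∧ t ≤ (m : ℤ) ∧ ¬(s = 0 ∧ t = -1)) → ω t s = 0)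
    (hωdeg : ∀ (t s : ℤ) i j, ω t s i j ∈ 𝒜 (t - s + 1).toNat)
    (hηsupp : ∀ t s : ℤ, ¬(0 ≤ s ∧ s ≤ t ∧ t ≤ (m : ℤ)) → η t s = 0)
    (hηdeg : ∀ (t s : ℤ) i j, η t s i j ∈ 𝒜 (t - s).toNat)
    (hgi : ∀ t : ℤ, gi t * (1 + η t t) = 1 ∧ (1 + η t t) * gi t = 1)
    -- the hypotheses on the vertical complex:
    -- `ω^{s−1,−1}·ω^{s,−1} = 0` for `s = 2,…,m`
    (hωcpx : ∀ s : ℤ, 2 ≤ s → s ≤ (m : ℤ) → ω (s - 2) (s - 1) * ω (s - 1) s = 0)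
    -- `∂̄_J ω^{s,−1} + ω^{s−1,0}·ω^{s,−1} = ω^{s,−1}·ω^{s,0}` for `s = 1,…,m`
    (hcommid : ∀ s : ℤ, 1 ≤ s → s ≤ (m : ℤ) →
      (ω (s - 1) s).map ⇑d + ω (s - 1) (s - 1) * ω (s - 1) s = ω (s - 1) s * ω s s)
    -- `η` solves the quasi-linear system `(S_ω)`
    (hsys : ∀ s k : ℤ, 0 ≤ s → 0 ≤ k → s + k ≤ (m : ℤ) →
      (η (s + k) s).map ⇑d
        + (∑ u ∈ Finset.Icc s (s + k + 1), ω (s + k) u * η u s)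
        + ((-1 : ℤ) ^ k.natAbs) •
            (η (s + k) (s - 1) * (gi (s - 1) * ω (s - 1) s * (1 + η s s)))
        + ω (s + k) s = 0) :
    -- then the integrability relations hold for all `k ≥ 0`
    ∀ s k : ℤ, 0 ≤ s → 0 ≤ k → s + k ≤ (m : ℤ) →
      (ω (s + k) s).map ⇑d + ∑ u ∈ Finset.Icc (s - 1) (s + k + 1),
        ((-1 : ℤ) ^ (s + k - u).natAbs) • (ω (s + k) u * ω u s) = 0 := by
  -- named data
  obtain ⟨A, hA⟩ : ∃ A : ∀ t s : ℤ, Matrix (Fin (p t)) (Fin (p s)) Ω,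
      ∀ t s : ℤ, A t s = Kd p t s + η t s :=
    ⟨fun t s => Kd p t s + η t s, fun _ _ => rfl⟩
  obtain ⟨β, hβ⟩ : ∃ B : ∀ s : ℤ, Matrix (Fin (p (s - 1))) (Fin (p s)) Ω,
      ∀ s : ℤ, B s = gi (s - 1) * ω (s - 1) s * (1 + η s s) :=
    ⟨fun s => gi (s - 1) * ω (s - 1) s * (1 + η s s), fun _ => rfl⟩
  obtain ⟨F, hF⟩ : ∃ F : ∀ t s : ℤ, Matrix (Fin (p t)) (Fin (p s)) Ω,
      ∀ t s : ℤ, F t s = (ω t s).map ⇑d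
        + ∑ u ∈ Finset.Icc (s - 1) (t + 1), eps (t - u) • (ω t u * ω u s) :=
    ⟨fun t s => _, fun _ _ => rfl⟩
  -- basic facts about d
  have hd1 : d 1 = 0 := by
    have h := hleib 0 1 1 h1mem
    rw [one_mul, pow_zero, one_smul, mul_one, one_mul] at h
    exact (left_eq_add.mp h)
  -- matrix-level d lemmas
  have mapd_add : ∀ (n1 n2 : ℕ) (X Y : Matrix (Fin n1) (Fin n2) Ω),
      (X + Y).map ⇑d = X.map ⇑d + Y.map ⇑d := by
    intro n1 n2 X Y; ext i j; simp [Matrix.map_apply]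
  have mapd_sub : ∀ (n1 n2 : ℕ) (X Y : Matrix (Fin n1) (Fin n2) Ω),
      (X - Y).map ⇑d = X.map ⇑d - Y.map ⇑d := by
    intro n1 n2 X Y; ext i j; simp [Matrix.map_apply]
  have mapd_smul : ∀ (n1 n2 : ℕ) (c : ℤ) (X : Matrix (Fin n1) (Fin n2) Ω),
      (c • X).map ⇑d = c • X.map ⇑d := by
    intro n1 n2 c X; ext i j
    simp only [Matrix.map_apply, Matrix.smul_apply]
    exact map_zsmul d c _
  have mapd_zero : ∀ (n1 n2 : ℕ), ((0 : Matrix (Fin n1) (Fin n2) Ω)).map ⇑d = 0 := by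
    intro n1 n2; ext i j; simp [Matrix.map_apply]
  have mapd_sum : ∀ (n1 n2 : ℕ) (S : Finset ℤ) (f : ℤ → Matrix (Fin n1) (Fin n2) Ω),
      (∑ x ∈ S, f x).map ⇑d = ∑ x ∈ S, (f x).map ⇑d := by
    intro n1 n2 S f; ext i j; simp [Matrix.map_apply, Matrix.sum_apply]
  have mapd_mapd : ∀ (n1 n2 : ℕ) (X : Matrix (Fin n1) (Fin n2) Ω),
      (X.map ⇑d).map ⇑d = 0 := by
    intro n1 n2 X; ext i j; simp [Matrix.map_apply, hd2]
  have Kd_mapd : ∀ (a b : ℤ), (Kd (Ω := Ω) p a b).map ⇑d = 0 := by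
    intro a b; ext i j
    simp only [Matrix.map_apply, Kd, Matrix.of_apply, Matrix.zero_apply]
    split
    · exact hd1
    · exact map_zero d
  -- graded Leibniz rule at matrix level
  have matLeib : ∀ (a : ℕ) (n1 n2 n3 : ℕ) (X : Matrix (Fin n1) (Fin n2) Ω)
      (Y : Matrix (Fin n2) (Fin n3) Ω), (∀ i j, X i j ∈ 𝒜 a) →
      (X * Y).map ⇑d = X.map ⇑d * Y + ((-1 : ℤ) ^ a) • (X * Y.map ⇑d) := by
    intro a n1 n2 n3 X Y hX
    ext i j
    simp only [Matrix.map_apply, Matrix.add_apply, Matrix.mul_apply, Matrix.smul_apply]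
    rw [map_sum, Finset.smul_sum, ← Finset.sum_add_distrib]
    exact Finset.sum_congr rfl fun k _ => hleib a _ _ (hX i k)
  -- support lemmas
  have hω0 : ∀ t s : ℤ, (s < 0 ∨ (m : ℤ) < s ∨ t < s - 1 ∨ (m : ℤ) < t ∨ (s = 0 ∧ t = -1)) →
      ω t s = 0 := by
    intro t s h
    apply hωsupp
    rintro ⟨h1, h2, h3, h4, h5⟩
    rcases h with h | h | h | h | h
    · omega
    · omega
    · omega
    · omega
    · exact h5 h
  have hη0 : ∀ t s : ℤ, (s < 0 ∨ t < s ∨ (m : ℤ) < t) → η t s = 0 := by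
    intro t s h
    apply hηsupp
    rintro ⟨h1, h2, h3⟩
    omega
  have hβ0 : ∀ s : ℤ, s ≤ 0 ∨ (m : ℤ) < s → β s = 0 := by
    intro s h
    rw [hβ, hω0 (s - 1) s (by omega), Matrix.mul_zero, Matrix.zero_mul]
  have Adeg : ∀ (t s : ℤ) i j, A t s i j ∈ 𝒜 ((t - s).toNat) := by
    intro t s i j
    by_cases h : t = s
    · subst h
      have h0 : ((t : ℤ) - t).toNat = 0 := by simp
      rw [hA, Kd_self, h0]
      have hη' := hηdeg t t i j
      rw [h0] at hη'
      simp only [Matrix.add_apply, Matrix.one_apply]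
      refine AddSubgroup.add_mem _ ?_ hη'
      split
      · exact h1mem
      · exact AddSubgroup.zero_mem _
    · rw [hA, Kd_ne p h, zero_add]
      exact hηdeg t s i j
  -- corner complexes
  have ωpair : ∀ r : ℤ, ω r (r + 1) * ω (r + 1) (r + 2) = 0 := by
    intro r
    by_cases h2 : 2 ≤ r + 2 ∧ r + 2 ≤ (m : ℤ)
    · have h := hωcpx (r + 2) h2.1 h2.2
      rw [show r + 2 - 2 = r from by ring, show r + 2 - 1 = r + 1 from by ring] at h
      exact h
    · by_cases h3 : (m : ℤ) < r + 2
      · rw [hω0 (r + 1) (r + 2) (by omega), Matrix.mul_zero]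
      · rw [hω0 r (r + 1) (by omega), Matrix.zero_mul]
  have ωpair2 : ∀ s : ℤ, ω (s - 2) (s - 1) * ω (s - 1) s = 0 := by
    intro s
    have h := ωpair (s - 2)
    rw [show s - 2 + 1 = s - 1 from by ring, show s - 2 + 2 = s from by ring] at h
    exact h
  have βpair : ∀ s : ℤ, β (s - 1) * β s = 0 := by
    intro s
    rw [hβ (s - 1), hβ s, show s - 1 - 1 = s - 2 from by ring]
    have h1 : (1 + η (s - 1) (s - 1)) * (gi (s - 1) * ω (s - 1) s * (1 + η s s))
        = ω (s - 1) s * (1 + η s s) := by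
      rw [Matrix.mul_assoc (gi (s - 1)) (ω (s - 1) s) (1 + η s s),
        ← Matrix.mul_assoc (1 + η (s - 1) (s - 1)) (gi (s - 1)) _, (hgi (s - 1)).2,
        Matrix.one_mul]
    rw [Matrix.mul_assoc (gi (s - 2) * ω (s - 2) (s - 1)) (1 + η (s - 1) (s - 1)) _, h1,
      Matrix.mul_assoc (gi (s - 2)) (ω (s - 2) (s - 1)) _,
      ← Matrix.mul_assoc (ω (s - 2) (s - 1)) (ω (s - 1) s) (1 + η s s), ωpair2 s,
      Matrix.zero_mul, Matrix.mul_zero]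
  have hAβ : ∀ s : ℤ, A (s - 1) (s - 1) * β s = ω (s - 1) s * A s s := by
    intro s
    rw [hA (s - 1) (s - 1), Kd_self, hA s s, Kd_self, hβ s,
      Matrix.mul_assoc (gi (s - 1)) (ω (s - 1) s) (1 + η s s),
      ← Matrix.mul_assoc (1 + η (s - 1) (s - 1)) (gi (s - 1)) _, (hgi (s - 1)).2,
      Matrix.one_mul]  -- the master equation: the system in gauge form, valid for ALL indices
  have Mst : ∀ t s : ℤ, (A t s).map ⇑d =
      eps (t - s + 1) • (A t (s - 1) * β s) - ∑ u ∈ Finset.Icc s (t + 1), ω t u * A u s := by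
    intro t s
    by_cases hc1 : 0 ≤ s ∧ s ≤ t ∧ t ≤ (m : ℤ)
    · obtain ⟨hs0, hst, htm⟩ := hc1
      have hs' := hsys s (t - s) hs0 (by omega) (by omega)
      rw [show s + (t - s) = t from by ring] at hs'
      rw [show ((-1 : ℤ) ^ (t - s).natAbs) = eps (t - s) from rfl] at hs'
      rw [hA t s, mapd_add, Kd_mapd, zero_add, hA t (s - 1),
        Kd_ne p (show t ≠ s - 1 from by omega), zero_add]
      have hsum : ∑ u ∈ Finset.Icc s (t + 1), ω t u * A u s
          = (∑ u ∈ Finset.Icc s (t + 1), ω t u * η u s) + ω t s := by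
        rw [Finset.sum_congr rfl (fun u _ => by rw [hA u s, Matrix.mul_add]),
          Finset.sum_add_distrib,
          Finset.sum_eq_single_of_mem s (by simp only [Finset.mem_Icc]; omega)
            (fun u hu hne => by rw [Kd_ne p hne, Matrix.mul_zero]),
          Kd_self, Matrix.mul_one, add_comm]
      rw [hsum, hβ s, eps_succ]
      linear_combination (norm := module) hs'
    · by_cases hc2 : t = s - 1
      · subst hc2
        rw [show s - 1 - s + 1 = 0 from by ring, eps_zero, one_smul,
          show s - 1 + 1 = s from by ring, Finset.Icc_self, Finset.sum_singleton]
        have hA0 : A (s - 1) s = 0 := by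
          rw [hA, Kd_ne p (by omega), hη0 (s - 1) s (by omega), add_zero]
        rw [hA0, mapd_zero, hAβ s, sub_self]
      · by_cases hc3 : t < s - 1
        · have hA1 : A t s = 0 := by
            rw [hA, Kd_ne p (by omega), hη0 t s (by omega), add_zero]
          have hA2 : A t (s - 1) = 0 := by
            rw [hA, Kd_ne p (by omega), hη0 t (s - 1) (by omega), add_zero]
          rw [hA1, hA2, mapd_zero, Matrix.zero_mul, smul_zero,
            Finset.Icc_eq_empty (show ¬ s ≤ t + 1 from by omega), Finset.sum_empty, sub_zero]
        · have hst : s ≤ t := by omega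
          have hmt : s < 0 ∨ (m : ℤ) < t := by
            by_contra hcon
            push_neg at hcon
            exact hc1 ⟨hcon.1, hst, hcon.2⟩
          have hη1 : η t s = 0 := hη0 t s (by omega)
          have hLHS : (A t s).map ⇑d = 0 := by
            rw [hA, hη1, add_zero, Kd_mapd]
          have hterm0 : ∀ u ∈ Finset.Icc s (t + 1), ω t u * A u s = 0 := by
            intro u hu
            simp only [Finset.mem_Icc] at hu
            rcases hmt with h | h
            · by_cases huz : u = s
              · subst huz
                rw [hω0 t u (by omega), Matrix.zero_mul]
              · rw [hA, Kd_ne p huz, hη0 u s (by omega), add_zero, Matrix.mul_zero]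
            · rw [hω0 t u (by omega), Matrix.zero_mul]
          have hβ2 : A t (s - 1) * β s = 0 := by
            rcases hmt with h | h
            · rw [hβ0 s (by omega), Matrix.mul_zero]
            · have hz : A t (s - 1) = 0 := by
                rw [hA, Kd_ne p (by omega), hη0 t (s - 1) (by omega), add_zero]
              rw [hz, Matrix.zero_mul]
          rw [hLHS, hβ2, smul_zero, Finset.sum_eq_zero hterm0, sub_zero]  -- F vanishes below the diagonal (from the complex and commutation hypotheses)
  have Fz : ∀ t s : ℤ, t < s → F t s = 0 := by
    intro t s hlt
    rw [hF]
    by_cases h1 : t = s - 1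
    · subst h1
      rw [show s - 1 + 1 = s from by ring,
        show Finset.Icc (s - 1) s = insert (s - 1) {s} from by
          ext x; simp only [Finset.mem_Icc, Finset.mem_insert, Finset.mem_singleton]; omega,
        Finset.sum_insert (by simp only [Finset.mem_singleton]; omega),
        Finset.sum_singleton, show s - 1 - (s - 1) = 0 from by ring,
        show s - 1 - s = -1 from by ring, eps_zero, one_smul, eps_neg_one,
        neg_smul, one_smul]
      by_cases hs : 1 ≤ s ∧ s ≤ (m : ℤ)
      · have hc := hcommid s hs.1 hs.2
        linear_combination (norm := module) hc
      · have hz : ω (s - 1) s = 0 := hω0 _ _ (by omega)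
        rw [hz, mapd_zero, Matrix.mul_zero, Matrix.zero_mul, neg_zero, add_zero, add_zero]
    · have h2 : ω t s = 0 := hω0 t s (by omega)
      rw [h2, mapd_zero, zero_add]
      apply Finset.sum_eq_zero
      intro u hu
      simp only [Finset.mem_Icc] at hu
      by_cases hu2 : u = s - 1
      · subst hu2
        rw [show t = s - 2 from by omega, ωpair2 s, smul_zero]
      · exact absurd (by omega : u = s - 1) hu2  -- the differentiated master equation: F ∘ A = A ∘ dβ
  have star : ∀ t s : ℤ, s ≤ t + 1 →
      (∑ v ∈ Finset.Icc s (t + 1), F t v * A v s) = A t (s - 1) * (β s).map ⇑d := by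
    intro t s hts
    have hins : Finset.Icc (s - 1) (t + 1) = insert (s - 1) (Finset.Icc s (t + 1)) := by
      ext x; simp only [Finset.mem_Icc, Finset.mem_insert]; omega
    have hnotmem : (s - 1) ∉ Finset.Icc s (t + 1) := by
      simp only [Finset.mem_Icc]; omega
    have hsmem : s ∈ Finset.Icc s (t + 1) := by
      simp only [Finset.mem_Icc]; omega
    -- E1 : d applied to the master equation at (t, s)
    have h0 : ((A t s).map ⇑d).map ⇑d = 0 := mapd_mapd _ _ _
    rw [Mst t s, mapd_sub, mapd_smul, mapd_sum] at h0
    have E1 : eps (t - s + 1) • ((A t (s - 1) * β s).map ⇑d)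
        = ∑ u ∈ Finset.Icc s (t + 1), (ω t u * A u s).map ⇑d := sub_eq_zero.mp h0
    -- expand the left-hand side
    have hL1 : (A t (s - 1) * β s).map ⇑d
        = (A t (s - 1)).map ⇑d * β s + eps (t - s + 1) • (A t (s - 1) * (β s).map ⇑d) := by
      rw [matLeib ((t - (s - 1)).toNat) _ _ _ _ _ (Adeg t (s - 1)),
        eps_toNat (show (0 : ℤ) ≤ t - (s - 1) from by omega),
        show t - (s - 1) = t - s + 1 from by ring]
    have hL2 : (A t (s - 1)).map ⇑d = eps (t - s + 2) • (A t (s - 1 - 1) * β (s - 1))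
        - ∑ w ∈ Finset.Icc (s - 1) (t + 1), ω t w * A w (s - 1) := by
      have h := Mst t (s - 1)
      rw [show t - (s - 1) + 1 = t - s + 2 from by ring] at h
      exact h
    have hββ : (A t (s - 1 - 1) * β (s - 1)) * β s = 0 := by
      rw [Matrix.mul_assoc, βpair, Matrix.mul_zero]
    have hL3 : (∑ w ∈ Finset.Icc (s - 1) (t + 1), ω t w * A w (s - 1)) * β s
        = ∑ w ∈ Finset.Icc (s - 1) (t + 1), ω t w * (A w (s - 1) * β s) := by
      rw [Matrix.sum_mul]
      exact Finset.sum_congr rfl fun w _ => Matrix.mul_assoc _ _ _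
    have hL : eps (t - s + 1) • ((A t (s - 1) * β s).map ⇑d)
        = A t (s - 1) * (β s).map ⇑d
          - eps (t - s + 1) • ∑ w ∈ Finset.Icc (s - 1) (t + 1), ω t w * (A w (s - 1) * β s) := by
      rw [hL1, hL2, Matrix.sub_mul, Matrix.smul_mul, hββ, smul_zero, zero_sub, hL3,
        smul_add, smul_neg, smul_smul, eps_sq, one_smul, neg_add_eq_sub]
    have E2 : A t (s - 1) * (β s).map ⇑d
        - eps (t - s + 1) • ∑ w ∈ Finset.Icc (s - 1) (t + 1), ω t w * (A w (s - 1) * β s)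
        = ∑ u ∈ Finset.Icc s (t + 1), (ω t u * A u s).map ⇑d := by
      rw [← hL]; exact E1
    -- expand the right-hand side termwise
    have hterm : ∀ u ∈ Finset.Icc s (t + 1), (ω t u * A u s).map ⇑d
        = (ω t u).map ⇑d * A u s + eps (t - s + 2) • (ω t u * (A u (s - 1) * β s))
          - ∑ v ∈ Finset.Icc s (u + 1), eps (t - u + 1) • (ω t u * (ω u v * A v s)) := by
      intro u hu
      simp only [Finset.mem_Icc] at hu
      have hee : eps (t - u + 1) * eps (u - s + 1) = eps (t - s + 2) := by
        rw [← eps_add]; congr 1; ring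
      rw [matLeib ((t - u + 1).toNat) _ _ _ _ _ (hωdeg t u),
        eps_toNat (show (0 : ℤ) ≤ t - u + 1 from by omega), Mst u s,
        Matrix.mul_sub, Matrix.mul_smul, smul_sub, smul_smul, hee,
        Matrix.mul_sum, Finset.smul_sum, add_sub_assoc]
    have hRHS : ∑ u ∈ Finset.Icc s (t + 1), (ω t u * A u s).map ⇑d
        = (∑ u ∈ Finset.Icc s (t + 1), (ω t u).map ⇑d * A u s)
          + eps (t - s + 2) • (∑ u ∈ Finset.Icc s (t + 1), ω t u * (A u (s - 1) * β s))
          - ∑ u ∈ Finset.Icc s (t + 1), ∑ v ∈ Finset.Icc s (u + 1),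
              eps (t - u + 1) • (ω t u * (ω u v * A v s)) := by
      rw [Finset.sum_congr rfl hterm, Finset.sum_sub_distrib, Finset.sum_add_distrib,
        ← Finset.smul_sum]
    -- manipulate the double sum
    have hT1 : ∀ u ∈ Finset.Icc s (t + 1),
        ∑ v ∈ Finset.Icc s (u + 1), eps (t - u + 1) • (ω t u * (ω u v * A v s))
        = ∑ v ∈ Finset.Icc s (t + 2), eps (t - u + 1) • (ω t u * (ω u v * A v s)) := by
      intro u hu
      simp only [Finset.mem_Icc] at hu
      apply Finset.sum_subset (Finset.Icc_subset_Icc le_rfl (by omega))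
      intro v hv hv2
      simp only [Finset.mem_Icc] at hv hv2
      rw [hω0 u v (by omega), Matrix.zero_mul, Matrix.mul_zero, smul_zero]
    have hT2 : ∑ u ∈ Finset.Icc s (t + 1), ∑ v ∈ Finset.Icc s (u + 1),
          eps (t - u + 1) • (ω t u * (ω u v * A v s))
        = ∑ v ∈ Finset.Icc s (t + 2), ∑ u ∈ Finset.Icc s (t + 1),
            eps (t - u + 1) • (ω t u * (ω u v * A v s)) := by
      rw [Finset.sum_congr rfl hT1]
      exact Finset.sum_comm
    have hslice : ∑ u ∈ Finset.Icc s (t + 1),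
        eps (t - u + 1) • (ω t u * (ω u (t + 2) * A (t + 2) s)) = 0 := by
      apply Finset.sum_eq_zero
      intro u hu
      simp only [Finset.mem_Icc] at hu
      by_cases h : u = t + 1
      · subst h
        rw [← Matrix.mul_assoc, ωpair t, Matrix.zero_mul, smul_zero]
      · rw [hω0 u (t + 2) (by omega), Matrix.zero_mul, Matrix.mul_zero, smul_zero]
    have hT3 : Finset.Icc s (t + 2) = insert (t + 2) (Finset.Icc s (t + 1)) := by
      ext x; simp only [Finset.mem_Icc, Finset.mem_insert]; omega
    have ht2notmem : (t + 2) ∉ Finset.Icc s (t + 1) := by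
      simp only [Finset.mem_Icc]; omega
    have hT4 : ∀ v ∈ Finset.Icc s (t + 1),
        ∑ u ∈ Finset.Icc s (t + 1), eps (t - u + 1) • (ω t u * (ω u v * A v s))
        = (∑ u ∈ Finset.Icc (s - 1) (t + 1), eps (t - u + 1) • (ω t u * (ω u v * A v s)))
          - eps (t - s + 2) • (ω t (s - 1) * (ω (s - 1) v * A v s)) := by
      intro v hv
      rw [hins, Finset.sum_insert hnotmem, show t - (s - 1) + 1 = t - s + 2 from by ring,
        add_sub_cancel_left]
    have hT5 : ∑ v ∈ Finset.Icc s (t + 1), eps (t - s + 2) • (ω t (s - 1) * (ω (s - 1) v * A v s))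
        = eps (t - s + 2) • (ω t (s - 1) * (ω (s - 1) s * A s s)) := by
      refine Finset.sum_eq_single_of_mem s hsmem fun v hv hvne => ?_
      simp only [Finset.mem_Icc] at hv
      rw [hω0 (s - 1) v (by omega), Matrix.zero_mul, Matrix.mul_zero, smul_zero]
    have hT : ∑ u ∈ Finset.Icc s (t + 1), ∑ v ∈ Finset.Icc s (u + 1),
          eps (t - u + 1) • (ω t u * (ω u v * A v s))
        = (∑ v ∈ Finset.Icc s (t + 1), ∑ u ∈ Finset.Icc (s - 1) (t + 1),
            eps (t - u + 1) • (ω t u * (ω u v * A v s)))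
          - eps (t - s + 2) • (ω t (s - 1) * (ω (s - 1) s * A s s)) := by
      rw [hT2, hT3, Finset.sum_insert ht2notmem, hslice, zero_add,
        Finset.sum_congr rfl hT4, Finset.sum_sub_distrib, hT5]
    -- split off the corner of the β-sum
    have hSβ : ∑ w ∈ Finset.Icc (s - 1) (t + 1), ω t w * (A w (s - 1) * β s)
        = ω t (s - 1) * (ω (s - 1) s * A s s)
          + ∑ w ∈ Finset.Icc s (t + 1), ω t w * (A w (s - 1) * β s) := by
      rw [hins, Finset.sum_insert hnotmem, hAβ]
    -- express F t v * A v s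
    have hFv : ∀ v ∈ Finset.Icc s (t + 1), F t v * A v s
        = (ω t v).map ⇑d * A v s
          - ∑ u ∈ Finset.Icc (s - 1) (t + 1), eps (t - u + 1) • (ω t u * (ω u v * A v s)) := by
      intro v hv
      simp only [Finset.mem_Icc] at hv
      rw [hF, Matrix.add_mul, Matrix.sum_mul]
      have hext : ∀ u ∈ Finset.Icc (s - 1) (t + 1), u ∉ Finset.Icc (v - 1) (t + 1) →
          (eps (t - u) • (ω t u * ω u v)) * A v s = 0 := by
        intro u hu hu2
        simp only [Finset.mem_Icc] at hu hu2
        rw [hω0 u v (by omega), Matrix.mul_zero, smul_zero, Matrix.zero_mul]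
      rw [Finset.sum_subset (Finset.Icc_subset_Icc (by omega) le_rfl) hext]
      have hper : ∀ u ∈ Finset.Icc (s - 1) (t + 1),
          (eps (t - u) • (ω t u * ω u v)) * A v s
          = -(eps (t - u + 1) • (ω t u * (ω u v * A v s))) := by
        intro u _
        rw [Matrix.smul_mul, Matrix.mul_assoc, eps_succ, neg_smul, neg_neg]
      rw [Finset.sum_congr rfl hper, Finset.sum_neg_distrib, ← sub_eq_add_neg]
    -- assemble
    have hgoal1 : ∑ v ∈ Finset.Icc s (t + 1), F t v * A v s
        = (∑ v ∈ Finset.Icc s (t + 1), (ω t v).map ⇑d * A v s)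
          - ∑ v ∈ Finset.Icc s (t + 1), ∑ u ∈ Finset.Icc (s - 1) (t + 1),
              eps (t - u + 1) • (ω t u * (ω u v * A v s)) := by
      rw [Finset.sum_congr rfl hFv, Finset.sum_sub_distrib]
    have e2 := E2
    rw [hRHS, hSβ] at e2
    have heps : eps (t - s + 2) = -eps (t - s + 1) := by
      rw [show t - s + 2 = (t - s + 1) + 1 from by ring, eps_succ]
    rw [heps] at e2 hT
    rw [hgoal1]
    linear_combination (norm := module) hT - e2  -- dβ = 0
  have hdβ : ∀ s : ℤ, (β s).map ⇑d = 0 := by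
    intro s
    have h1 := star (s - 1) s (by omega)
    rw [show s - 1 + 1 = s from by ring, Finset.Icc_self, Finset.sum_singleton,
      Fz (s - 1) s (by omega), Matrix.zero_mul] at h1
    have h2 := congrArg (fun X => gi (s - 1) * X) h1
    rw [Matrix.mul_zero, ← Matrix.mul_assoc, hA (s - 1) (s - 1), Kd_self,
      (hgi (s - 1)).1, Matrix.one_mul] at h2
    exact h2.symm
  have hFA : ∀ t s : ℤ, s ≤ t + 1 →
      ∑ v ∈ Finset.Icc s (t + 1), F t v * A v s = 0 := by
    intro t s hts
    rw [star t s hts, hdβ s, Matrix.mul_zero]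
  -- downward induction: F = 0 everywhere
  have key : ∀ n : ℕ, ∀ t s : ℤ, (t + 2 - s).toNat ≤ n → F t s = 0 := by
    intro n
    induction n with
    | zero => intro t s h; exact Fz t s (by omega)
    | succ n ih =>
      intro t s h
      by_cases hts : t < s
      · exact Fz t s hts
      · have h1 := hFA t s (by omega)
        rw [show Finset.Icc s (t + 1) = insert s (Finset.Icc (s + 1) (t + 1)) from by
            ext x; simp only [Finset.mem_Icc, Finset.mem_insert]; omega,
          Finset.sum_insert (by simp only [Finset.mem_Icc]; omega),
          Finset.sum_eq_zero (fun v hv => by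
            rw [ih t v (by simp only [Finset.mem_Icc] at hv; omega), Matrix.zero_mul]),
          add_zero] at h1
        have h3 : F t s * (A s s * gi s) = 0 := by
          rw [← Matrix.mul_assoc, h1, Matrix.zero_mul]
        rw [hA s s, Kd_self, (hgi s).2, Matrix.mul_one] at h3
        exact h3
  -- conclusion
  intro s k hs hk hsk
  have hfin := key (s + k + 2 - s).toNat (s + k) s le_rfl
  rw [hF] at hfin
  exact hfin
end

section
/- For the scale-invariant weighted Hölder norms ‖u‖_{r,h,μ,q} := Σ_{|I|=q, |α|≤h} S_{|α|} r^{|α|+q} ‖∂^α u_I‖_{r,μ}, if the weights satisfy S_k ≤ [max_{|α+β|=k} binom(α+β,α)]^{-1} S_j S_{k−j} for all 1 ≤ j ≤ k−1, then the norm is submultiplicative: ‖u ∧ v‖_{r,h,μ,p+q} ≤ ‖u‖_{r,h,μ,q} · ‖v‖_{r,h,μ,p}. -/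
/-!
By the multi-index Leibniz rule, `∂^α (x y) = Σ_{β+γ=α} binom(α, β) ∂^β x ∂^γ y`, and the weight
condition `binom(β+γ, β) S_{|β+γ|} ≤ S_{|β|} S_{|γ|}` absorbs exactly these binomial coefficients.
Hence the norm `Σ_{|α| ≤ h} S_{|α|} r^{|α|} ‖∂^α x‖` of a single coefficient is submultiplicative:
`(α, β)` ↦ `(β, α - β)` is injective and stays in `{|·| ≤ h}`. For forms the factor `r^{|K|}` splits
as `r^{|I|} r^{|K \ I|}`, and `(K, I)` ↦ `(I, K \ I)` is again injective.
-/

/-- Iterated partial derivative `∂^α` built from a family of commuting derivations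
`Dop i` (the partial derivatives on the ball). -/
noncomputable def pderiv {A : Type*} [AddCommGroup A] (N : ℕ) (Dop : Fin N → A →+ A)
    (α : Fin N → ℕ) : A → A :=
  ((List.finRange N).map fun i => (⇑(Dop i))^[α i]).foldr (· ∘ ·) id

/-- The scale-invariant weighted Hölder norm
`‖u‖_{r,h,μ,q} = Σ_{|I|=q, |α|≤h} S_{|α|} r^{|α|+q} ‖∂^α u_I‖_{r,μ}` of a (0,q)-form `u`
with matrix coefficients `u_I ∈ A`, the norm of `A` playing the role of the Hölder norm
`‖·‖_{r,μ}` (submultiplicative operator-norm based Hölder norm of matrix-valued maps).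
The coefficients are indexed by subsets `I ⊆ {1,…,n}` (with `u_I = 0` for `|I| ≠ q`). -/
noncomputable def hnorm {A : Type*} [NormedRing A] (n N : ℕ) (Dop : Fin N → A →+ A)
    (S : ℕ → ℝ) (r : ℝ) (h : ℕ) (u : Finset (Fin n) → A) : ℝ :=
  ∑ I : Finset (Fin n),
    ∑ α ∈ (Fintype.piFinset fun _ : Fin N => Finset.range (h + 1)).filter
        fun α => (∑ i, α i) ≤ h,
      S (∑ i, α i) * r ^ ((∑ i, α i) + I.card) * ‖pderiv N Dop α (u I)‖

open Finset

theorem Finset.sum_le_sum_of_injOn {ι κ M : Type*} [AddCommMonoid M] [PartialOrder M]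
    [IsOrderedAddMonoid M] {s : Finset ι} {t : Finset κ} (e : ι → κ) (he : Set.InjOn e s)
    (hest : Set.MapsTo e s t) (g : κ → M) (hg : ∀ j ∈ t, 0 ≤ g j) :
    ∑ i ∈ s, g (e i) ≤ ∑ j ∈ t, g j := by
  classical
  rw [← sum_image he]
  exact sum_le_sum_of_subset_of_nonneg (image_subset_iff.2 hest) fun j hj _ => hg j hj

theorem Finset.sum_sum_powerset_sdiff_le {ι M : Type*} [Fintype ι] [DecidableEq ι]
    [AddCommMonoid M] [PartialOrder M] [IsOrderedAddMonoid M]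
    (g : Finset ι → Finset ι → M) (hg : ∀ I J, 0 ≤ g I J) :
    ∑ K, ∑ I ∈ K.powerset, g I (K \ I) ≤ ∑ I, ∑ J, g I J := by
  rw [← sum_sigma univ powerset fun p => g p.2 (p.1 \ p.2), ← sum_product' (f := g)]
  refine sum_le_sum_of_injOn (fun p : Σ _ : Finset ι, Finset ι => (p.2, p.1 \ p.2)) ?_
    (fun _ _ => by simp) (fun p => g p.1 p.2) fun _ _ => hg _ _
  rintro ⟨K, I⟩ hKI ⟨K', I'⟩ hKI' hsame
  simp only [coe_sigma, Set.mem_sigma_iff, coe_univ, Set.mem_univ, mem_coe, mem_powerset,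
    true_and, Prod.mk.injEq] at hKI hKI' hsame
  obtain ⟨rfl, hsdiff⟩ := hsame
  rw [← union_sdiff_of_subset hKI, ← union_sdiff_of_subset hKI', hsdiff]

theorem Fintype.sum_piFinset_succ {M β : Type*} [AddCommMonoid M] {N : ℕ}
    (s : Fin (N + 1) → Finset β) (f : (Fin (N + 1) → β) → M) :
    ∑ p ∈ piFinset s, f p = ∑ a ∈ s 0, ∑ q ∈ piFinset (Fin.tail s), f (Fin.cons a q) := by
  have hcons := filter_piFinset_eq_map_consEquiv s fun _ => True
  simp only [filter_true] at hcons
  rw [hcons, sum_map, sum_product]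
  rfl

theorem AddMonoidHom.iterate_map_mul_of_leibniz {A : Type*} [NonUnitalNonAssocRing A]
    (D : A →+ A) (hD : ∀ x y, D (x * y) = D x * y + x * D y) (n : ℕ) (x y : A) :
    D^[n] (x * y) = ∑ ij ∈ antidiagonal n, n.choose ij.1 • (D^[ij.1] x * D^[ij.2] y) := by
  induction n with
  | zero => simp
  | succ n ih =>
    rw [sum_antidiagonal_choose_succ_nsmul (fun i j => D^[i] x * D^[j] y) n]
    simp only [Function.iterate_succ_apply', ih, map_sum, map_nsmul, hD, smul_add,
      sum_add_distrib]
    rw [add_comm]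
    congr 1
    refine sum_congr rfl fun ij hij => ?_
    rw [n.choose_symm_of_eq_add (mem_antidiagonal.1 hij).symm]

section PartialDerivatives

variable {N : ℕ}

theorem pderiv_succ {A : Type*} [AddCommGroup A] (D : Fin (N + 1) → A →+ A)
    (α : Fin (N + 1) → ℕ) (x : A) :
    pderiv (N + 1) D α x = (D 0)^[α 0] (pderiv N (fun i => D i.succ) (Fin.tail α) x) := by
  simp [pderiv, List.finRange_succ, Function.comp_def, Fin.tail]

theorem pderiv_add {A : Type*} [AddCommGroup A] (D : Fin N → A →+ A) (α : Fin N → ℕ)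
    (x y : A) : pderiv N D α (x + y) = pderiv N D α x + pderiv N D α y := by
  induction N with
  | zero => rfl
  | succ N ih => simp only [pderiv_succ, ih, iterate_map_add]

noncomputable def pderivAddHom {A : Type*} [AddCommGroup A] (D : Fin N → A →+ A)
    (α : Fin N → ℕ) : A →+ A :=
  AddMonoidHom.mk' (pderiv N D α) (pderiv_add D α)

/-- `β + γ = α` is encoded as `q i = (β i, γ i) ∈ antidiagonal (α i)`. -/
theorem pderiv_mul {A : Type*} [NonUnitalNonAssocRing A] (D : Fin N → A →+ A)
    (hD : ∀ i x y, D i (x * y) = D i x * y + x * D i y) (α : Fin N → ℕ) (x y : A) :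
    pderiv N D α (x * y) = ∑ q ∈ Fintype.piFinset fun i => antidiagonal (α i),
      (∏ i, (α i).choose (q i).1) •
        (pderiv N D (fun i => (q i).1) x * pderiv N D (fun i => (q i).2) y) := by
  induction N with
  | zero => simp [pderiv]
  | succ N ih =>
    -- `(D 0)^[n]` is the `n`-th power in `AddMonoid.End A`, hence additive
    let D₀ : AddMonoid.End A := D 0
    have hiter : ∀ n z, (D 0)^[n] z = (D₀ ^ n) z := fun _ _ => rfl
    rw [Fintype.sum_piFinset_succ, pderiv_succ, ih _ fun i => hD i.succ, hiter, map_sum]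
    simp only [map_nsmul]
    simp only [← hiter, (D 0).iterate_map_mul_of_leibniz (hD 0), smul_sum]
    rw [sum_comm]
    refine sum_congr rfl fun ij _ => sum_congr rfl fun q _ => ?_
    simp only [pderiv_succ, Fin.prod_univ_succ, Fin.cons_zero, Fin.cons_succ, mul_smul,
      Fin.tail_def]
    exact smul_comm _ _ _

end PartialDerivatives

def boundedMultiIndices (N h : ℕ) : Finset (Fin N → ℕ) :=
  (Fintype.piFinset fun _ : Fin N => range (h + 1)).filter fun α => (∑ i, α i) ≤ h

theorem mem_boundedMultiIndices {N h : ℕ} {α : Fin N → ℕ} :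
    α ∈ boundedMultiIndices N h ↔ ∑ i, α i ≤ h := by
  simp only [boundedMultiIndices, mem_filter, Fintype.mem_piFinset, mem_range,
    and_iff_right_iff_imp]
  exact fun hα i => Nat.lt_succ_of_le ((single_le_sum (fun j _ => Nat.zero_le (α j))
    (mem_univ i)).trans hα)

theorem sum_boundedMultiIndices_antidiagonal_le {M : Type*} [AddCommMonoid M] [PartialOrder M]
    [IsOrderedAddMonoid M] {N : ℕ} (h : ℕ) (g : (Fin N → ℕ) → (Fin N → ℕ) → M)
    (hg : ∀ β γ, 0 ≤ g β γ) :
    ∑ α ∈ boundedMultiIndices N h, ∑ q ∈ Fintype.piFinset fun i => antidiagonal (α i),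
        g (fun i => (q i).1) (fun i => (q i).2) ≤
      ∑ β ∈ boundedMultiIndices N h, ∑ γ ∈ boundedMultiIndices N h, g β γ := by
  rw [← sum_sigma (boundedMultiIndices N h)
    (fun α => Fintype.piFinset fun i => antidiagonal (α i))
    fun p => g (fun i => (p.2 i).1) (fun i => (p.2 i).2), ← sum_product' (f := g)]
  refine sum_le_sum_of_injOn
    (fun p : Σ _ : Fin N → ℕ, Fin N → ℕ × ℕ => ((fun i => (p.2 i).1), (fun i => (p.2 i).2)))
    ?_ ?_ (fun p => g p.1 p.2) fun _ _ => hg _ _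
  · rintro ⟨α, q⟩ hq ⟨α', q'⟩ hq' hsame
    simp only [coe_sigma, Set.mem_sigma_iff, mem_coe, Fintype.mem_piFinset,
      HasAntidiagonal.mem_antidiagonal, Prod.mk.injEq, funext_iff] at hq hq' hsame
    obtain rfl : q = q' := funext fun i => Prod.ext (hsame.1 i) (hsame.2 i)
    obtain rfl : α = α' := funext fun i => (hq.2 i).symm.trans (hq'.2 i)
    rfl
  · rintro ⟨α, q⟩ hq
    simp only [coe_sigma, Set.mem_sigma_iff, mem_coe, Fintype.mem_piFinset,
      HasAntidiagonal.mem_antidiagonal, mem_boundedMultiIndices] at hq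
    have hle : ∀ i, (q i).1 ≤ α i ∧ (q i).2 ≤ α i := fun i => by have := hq.2 i; omega
    simp only [coe_product, Set.mem_prod, mem_coe, mem_boundedMultiIndices]
    exact ⟨(sum_le_sum fun i _ => (hle i).1).trans hq.1,
      (sum_le_sum fun i _ => (hle i).2).trans hq.1⟩

def BinomialWeightBound (N : ℕ) (S : ℕ → ℝ) : Prop :=
  ∀ β γ : Fin N → ℕ,
    (∏ i, ((β i + γ i).choose (β i) : ℝ)) * S (∑ i, β i + ∑ i, γ i) ≤ S (∑ i, β i) * S (∑ i, γ i)

theorem binomialWeightBound_of_forall_le {N : ℕ} {S : ℕ → ℝ} (hS0 : S 0 = 1)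
    (hS : ∀ (k j : ℕ), 1 ≤ j → j ≤ k - 1 →
      ∀ α β : Fin N → ℕ, (∑ i, α i) = j → (∑ i, β i) = k - j →
        (∏ i, ((α i + β i).choose (α i) : ℝ)) * S k ≤ S j * S (k - j)) :
    BinomialWeightBound N S := by
  intro β γ
  rcases Nat.eq_zero_or_pos (∑ i, β i) with hβ | hβ
  · have hβ0 : β = 0 := funext fun i => sum_eq_zero_iff.mp hβ i (mem_univ i)
    simp [hβ0, hS0]
  rcases Nat.eq_zero_or_pos (∑ i, γ i) with hγ | hγ
  · have hγ0 : γ = 0 := funext fun i => sum_eq_zero_iff.mp hγ i (mem_univ i)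
    simp [hγ0, hS0]
  simpa using hS (∑ i, β i + ∑ i, γ i) _ hβ (by omega) β γ rfl (by omega)

section JetNorm

variable {A : Type*} [NormedRing A] {N : ℕ} (D : Fin N → A →+ A) (S : ℕ → ℝ) (r : ℝ) (h : ℕ)

noncomputable def jetTerm (α : Fin N → ℕ) (x : A) : ℝ :=
  S (∑ i, α i) * r ^ (∑ i, α i) * ‖pderiv N D α x‖

/-- The norm `‖·‖_{r,h,μ}` of a single coefficient, i.e. of a `(0,0)`-form. -/
noncomputable def jetNorm (x : A) : ℝ :=
  ∑ α ∈ boundedMultiIndices N h, jetTerm D S r α x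

theorem hnorm_eq_sum_jetNorm (n : ℕ) (u : Finset (Fin n) → A) :
    hnorm n N D S r h u = ∑ I, r ^ I.card * jetNorm D S r h (u I) := by
  simp only [hnorm, jetNorm, jetTerm, boundedMultiIndices, mul_sum, pow_add]
  exact sum_congr rfl fun I _ => sum_congr rfl fun α _ => by ring

variable {D S r}

theorem jetTerm_nonneg (hS : ∀ k, 0 ≤ S k) (hr : 0 ≤ r) (α : Fin N → ℕ) (x : A) :
    0 ≤ jetTerm D S r α x :=
  mul_nonneg (mul_nonneg (hS _) (pow_nonneg hr _)) (norm_nonneg _)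

theorem jetNorm_nonneg (hS : ∀ k, 0 ≤ S k) (hr : 0 ≤ r) (x : A) : 0 ≤ jetNorm D S r h x :=
  sum_nonneg fun α _ => jetTerm_nonneg hS hr α x

theorem jetNorm_sum_zsmul_le (hS : ∀ k, 0 ≤ S k) (hr : 0 ≤ r) {ι : Type*} (s : Finset ι)
    (c : ι → ℤ) (hc : ∀ i ∈ s, |c i| ≤ 1) (w : ι → A) :
    jetNorm D S r h (∑ i ∈ s, c i • w i) ≤ ∑ i ∈ s, jetNorm D S r h (w i) := by
  simp only [jetNorm, jetTerm]
  rw [sum_comm]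
  refine sum_le_sum fun α _ => ?_
  rw [← mul_sum]
  refine mul_le_mul_of_nonneg_left ?_ (mul_nonneg (hS _) (pow_nonneg hr _))
  change ‖pderivAddHom D α (∑ i ∈ s, c i • w i)‖ ≤ ∑ i ∈ s, ‖pderivAddHom D α (w i)‖
  rw [map_sum]
  refine (norm_sum_le _ _).trans (sum_le_sum fun i hi => ?_)
  rw [map_zsmul]
  refine (norm_zsmul_le _ _).trans (mul_le_of_le_one_left (norm_nonneg _) ?_)
  rw [Int.norm_eq_abs]
  exact_mod_cast hc i hi

theorem norm_pderiv_mul_le (hD : ∀ i x y, D i (x * y) = D i x * y + x * D i y)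
    (α : Fin N → ℕ) (x y : A) :
    ‖pderiv N D α (x * y)‖ ≤ ∑ q ∈ Fintype.piFinset fun i => antidiagonal (α i),
      (∏ i, ((α i).choose (q i).1 : ℝ)) *
        (‖pderiv N D (fun i => (q i).1) x‖ * ‖pderiv N D (fun i => (q i).2) y‖) := by
  rw [pderiv_mul D hD]
  refine (norm_sum_le _ _).trans (sum_le_sum fun q _ => ?_)
  refine norm_nsmul_le.trans ?_
  push_cast
  exact mul_le_mul_of_nonneg_left (norm_mul_le _ _) (by positivity)

theorem jetTerm_mul_le (hD : ∀ i x y, D i (x * y) = D i x * y + x * D i y)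
    (hS : ∀ k, 0 ≤ S k) (hSmul : BinomialWeightBound N S) (hr : 0 ≤ r) (α : Fin N → ℕ) (x y : A) :
    jetTerm D S r α (x * y) ≤ ∑ q ∈ Fintype.piFinset fun i => antidiagonal (α i),
      jetTerm D S r (fun i => (q i).1) x * jetTerm D S r (fun i => (q i).2) y := by
  refine (mul_le_mul_of_nonneg_left (norm_pderiv_mul_le hD α x y)
    (mul_nonneg (hS _) (pow_nonneg hr _))).trans ?_
  rw [mul_sum]
  refine sum_le_sum fun q hq => ?_
  obtain rfl : α = fun i => (q i).1 + (q i).2 := funext fun i =>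
    (HasAntidiagonal.mem_antidiagonal.mp (Fintype.mem_piFinset.mp hq i)).symm
  simp only [jetTerm, sum_add_distrib, pow_add]
  set C := ∏ i, (((q i).1 + (q i).2).choose (q i).1 : ℝ)
  set b := ∑ i, (q i).1
  set c := ∑ i, (q i).2
  set X := ‖pderiv N D (fun i => (q i).1) x‖
  set Y := ‖pderiv N D (fun i => (q i).2) y‖
  have hXY : 0 ≤ r ^ b * X * (r ^ c * Y) := by positivity
  calc S (b + c) * (r ^ b * r ^ c) * (C * (X * Y))
      = C * S (b + c) * (r ^ b * X * (r ^ c * Y)) := by ring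
    _ ≤ S b * S c * (r ^ b * X * (r ^ c * Y)) := mul_le_mul_of_nonneg_right (hSmul _ _) hXY
    _ = S b * r ^ b * X * (S c * r ^ c * Y) := by ring

theorem jetNorm_mul_le (hD : ∀ i x y, D i (x * y) = D i x * y + x * D i y)
    (hS : ∀ k, 0 ≤ S k) (hSmul : BinomialWeightBound N S) (hr : 0 ≤ r) (x y : A) :
    jetNorm D S r h (x * y) ≤ jetNorm D S r h x * jetNorm D S r h y :=
  calc jetNorm D S r h (x * y)
      ≤ ∑ α ∈ boundedMultiIndices N h, ∑ q ∈ Fintype.piFinset fun i => antidiagonal (α i),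
          jetTerm D S r (fun i => (q i).1) x * jetTerm D S r (fun i => (q i).2) y :=
        sum_le_sum fun α _ => jetTerm_mul_le hD hS hSmul hr α x y
    _ ≤ ∑ β ∈ boundedMultiIndices N h, ∑ γ ∈ boundedMultiIndices N h,
          jetTerm D S r β x * jetTerm D S r γ y :=
        sum_boundedMultiIndices_antidiagonal_le h _ fun β γ =>
          mul_nonneg (jetTerm_nonneg hS hr β x) (jetTerm_nonneg hS hr γ y)
    _ = jetNorm D S r h x * jetNorm D S r h y := (sum_mul_sum _ _ _ _).symm

end JetNorm

section Wedge

variable {A : Type*} [NormedRing A] {N : ℕ} {D : Fin N → A →+ A} {S : ℕ → ℝ} {r : ℝ} (h : ℕ)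
  {n : ℕ} (ε : Finset (Fin n) → Finset (Fin n) → ℤ) (u v : Finset (Fin n) → A)

theorem pow_card_mul_jetNorm_wedge_le (hD : ∀ i x y, D i (x * y) = D i x * y + x * D i y)
    (hS : ∀ k, 0 ≤ S k) (hSmul : BinomialWeightBound N S) (hr : 0 ≤ r)
    (hε : ∀ I J, |ε I J| ≤ 1) (K : Finset (Fin n)) :
    r ^ K.card * jetNorm D S r h (∑ I ∈ K.powerset, ε I (K \ I) • (u I * v (K \ I))) ≤
      ∑ I ∈ K.powerset, r ^ I.card * jetNorm D S r h (u I) *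
        (r ^ (K \ I).card * jetNorm D S r h (v (K \ I))) :=
  calc r ^ K.card * jetNorm D S r h (∑ I ∈ K.powerset, ε I (K \ I) • (u I * v (K \ I)))
      ≤ r ^ K.card * ∑ I ∈ K.powerset, jetNorm D S r h (u I) * jetNorm D S r h (v (K \ I)) := by
        gcongr
        refine (jetNorm_sum_zsmul_le h hS hr _ _ (fun I _ => hε _ _) _).trans ?_
        exact sum_le_sum fun I _ => jetNorm_mul_le h hD hS hSmul hr _ _
    _ = _ := by
        rw [mul_sum]
        refine sum_congr rfl fun I hI => ?_
        rw [← card_sdiff_add_card_eq_card (mem_powerset.mp hI)]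
        ring

theorem hnorm_wedge_le (hD : ∀ i x y, D i (x * y) = D i x * y + x * D i y)
    (hS : ∀ k, 0 ≤ S k) (hSmul : BinomialWeightBound N S) (hr : 0 ≤ r) (hε : ∀ I J, |ε I J| ≤ 1) :
    hnorm n N D S r h (fun K => ∑ I ∈ K.powerset, ε I (K \ I) • (u I * v (K \ I))) ≤
      hnorm n N D S r h u * hnorm n N D S r h v := by
  have hterm : ∀ (w : Finset (Fin n) → A) I, 0 ≤ r ^ I.card * jetNorm D S r h (w I) := fun w I =>
    mul_nonneg (pow_nonneg hr _) (jetNorm_nonneg h hS hr _)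
  rw [hnorm_eq_sum_jetNorm, hnorm_eq_sum_jetNorm, hnorm_eq_sum_jetNorm, sum_mul_sum]
  exact (sum_le_sum fun K _ => pow_card_mul_jetNorm_wedge_le h ε u v hD hS hSmul hr hε K).trans
    (sum_sum_powerset_sdiff_le _ fun I J => mul_nonneg (hterm u I) (hterm v J))

end Wedge

theorem stmt9_general {A : Type*} [NormedRing A] (n N : ℕ)
    (Dop : Fin N → A →+ A)
    (hleib : ∀ (i : Fin N) (x y : A), Dop i (x * y) = Dop i x * y + x * Dop i y)
    (S : ℕ → ℝ) (hS0 : S 0 = 1) (hSpos : ∀ k, 0 < S k)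
    (hS : ∀ (k j : ℕ), 1 ≤ j → j ≤ k - 1 →
      ∀ α β : Fin N → ℕ, (∑ i, α i) = j → (∑ i, β i) = k - j →
        (∏ i, ((α i + β i).choose (α i) : ℝ)) * S k ≤ S j * S (k - j))
    (r : ℝ) (hr : 0 < r) (h : ℕ)
    (ε : Finset (Fin n) → Finset (Fin n) → ℤ)
    (hε : ∀ I J, ε I J = 0 ∨ ε I J = 1 ∨ ε I J = -1)
    (u v : Finset (Fin n) → A) :
    hnorm n N Dop S r h (fun K => ∑ I ∈ K.powerset, ε I (K \ I) • (u I * v (K \ I)))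
      ≤ hnorm n N Dop S r h u * hnorm n N Dop S r h v :=
  hnorm_wedge_le h ε u v hleib (fun k => (hSpos k).le)
    (binomialWeightBound_of_forall_le hS0 hS) hr.le
    fun I J => by rcases hε I J with hIJ | hIJ | hIJ <;> simp [hIJ]

/-- For the scale-invariant weighted Hölder norms, if the weights satisfy
`S_k ≤ [max_{|α+β|=k} binom(α+β,α)]⁻¹ S_j S_{k−j}` for all `1 ≤ j ≤ k−1` (hypothesis `hS`,
stated equivalently as `binom(α+β,α)·S_k ≤ S_j·S_{k-j}` for `|α| = j`, `|β| = k-j`), then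
the norm is submultiplicative: `‖u ∧ v‖_{r,h,μ,p+q} ≤ ‖u‖_{r,h,μ,q}·‖v‖_{r,h,μ,p}`.
The wedge of the forms `u` and `v` combines matrix multiplication (in `A`) with the wedge
of forms: `(u∧v)_K = Σ_{I⊆K} ε(I,K∖I)·u_I·v_{K∖I}` with signs `ε ∈ {0,±1}`. -/
theorem stmt9 {A : Type*} [NormedRing A] (n N : ℕ)
    (Dop : Fin N → A →+ A)
    (hleib : ∀ (i : Fin N) (x y : A), Dop i (x * y) = Dop i x * y + x * Dop i y)
    (hcomm : ∀ (i j : Fin N) (x : A), Dop i (Dop j x) = Dop j (Dop i x))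
    (S : ℕ → ℝ) (hS0 : S 0 = 1) (hSpos : ∀ k, 0 < S k)
    (hS : ∀ (k j : ℕ), 1 ≤ j → j ≤ k - 1 →
      ∀ α β : Fin N → ℕ, (∑ i, α i) = j → (∑ i, β i) = k - j →
        (∏ i, ((α i + β i).choose (α i) : ℝ)) * S k ≤ S j * S (k - j))
    (r : ℝ) (hr : 0 < r) (h q pdeg : ℕ)
    (ε : Finset (Fin n) → Finset (Fin n) → ℤ)
    (hε : ∀ I J, ε I J = 0 ∨ ε I J = 1 ∨ ε I J = -1)
    (u v : Finset (Fin n) → A)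
    (hu : ∀ I : Finset (Fin n), I.card ≠ q → u I = 0)
    (hv : ∀ J : Finset (Fin n), J.card ≠ pdeg → v J = 0) :
    hnorm n N Dop S r h (fun K => ∑ I ∈ K.powerset, ε I (K \ I) • (u I * v (K \ I)))
      ≤ hnorm n N Dop S r h u * hnorm n N Dop S r h v :=
  stmt9_general n N Dop hleib S hS0 hSpos hS r hr h ε hε u v
end
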